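/- arXiv:2109.11419 — 2 statements merged into one kernel-verified Lean document; each statement's English description precedes it below -/
import Mathlib

section
/- Assume 1 ≤ C ≤ N−1. Let 𝖢 = Σ_{c=1}^C 𝔠^c_c and 𝖡 = Σ_β 𝔟^β_β. The derived ideal [net_{C,N}, net_{C,N}] (the span of all brackets of elements of net_{C,N}) has codimension 2 in net_{C,N}, and the images of 𝖡 and 𝖢 form a basis of the quotient vector space net_{C,N} / [net_{C,N}, net_{C,N}]; equivalently, the first homology H₁(net_{C,N}, net_{C,N}) = net_{C,N}/[net_{C,N}, net_{C,N}] is 2-dimensional, spanned by the classes of 𝖡 and 𝖢. -/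
open Matrix BigOperators

/-- Index type for the standard basis of `ℝ^N`, `N = n 0 + ⋯ + n (C-1)`:
pairs `(c, i)` with `c` a color and `0 ≤ i ≤ n c - 1`. -/
abbrev Idx {C : ℕ} (n : Fin C → ℕ) := Σ c : Fin C, Fin (n c)

/-- A cocolor is a pair `(k, j)` with `1 ≤ j ≤ n k - 1`. -/
abbrev Cocolor {C : ℕ} (n : Fin C → ℕ) := {p : Idx n // (p.2 : ℕ) ≠ 0}

/-- `ν(σ) = Σ_j e_{(k, σ j)} (e^{(l, j)})ᵀ`. -/
noncomputable def nu {C : ℕ} (n : Fin C → ℕ) (k l : Fin C) (σ : Fin (n l) → Fin (n k)) :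
    Matrix (Idx n) (Idx n) ℝ :=
  ∑ j : Fin (n l), Matrix.single (⟨k, σ j⟩ : Idx n) (⟨l, j⟩ : Idx n) 1

/-- The network algebra `net_{C,N}`: the `ℝ`-span of all the `ν(σ)`. -/
noncomputable def net {C : ℕ} (n : Fin C → ℕ) : Submodule ℝ (Matrix (Idx n) (Idx n) ℝ) :=
  Submodule.span ℝ {M | ∃ (k l : Fin C) (σ : Fin (n l) → Fin (n k)), M = nu n k l σ}

/-- Vectors `x^k_0 = e_{(k,0)}` and `x^k_j = e_{(k,j)} - e_{(k,0)}` for `j ≠ 0`. -/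
noncomputable def xv {C : ℕ} (n : Fin C → ℕ) (hn : ∀ c, 0 < n c) (k : Fin C)
    (j : Fin (n k)) : Idx n → ℝ :=
  if (j : ℕ) = 0 then Pi.single (⟨k, j⟩ : Idx n) 1
  else Pi.single (⟨k, j⟩ : Idx n) 1 - Pi.single (⟨k, ⟨0, hn k⟩⟩ : Idx n) 1

/-- Covectors `X^k_0 = Σ_q e^{(k,q)}` and `X^k_i = e^{(k,i)}` for `i ≠ 0`. -/
noncomputable def Xv {C : ℕ} (n : Fin C → ℕ) (k : Fin C) (i : Fin (n k)) : Idx n → ℝ :=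
  if (i : ℕ) = 0 then ∑ q : Fin (n k), Pi.single (⟨k, q⟩ : Idx n) 1
  else Pi.single (⟨k, i⟩ : Idx n) 1

/-- `𝔠^k_l = x^k_0 (X^l_0)ᵀ`. -/
noncomputable def cM {C : ℕ} (n : Fin C → ℕ) (hn : ∀ c, 0 < n c) (k l : Fin C) :
    Matrix (Idx n) (Idx n) ℝ :=
  vecMulVec (xv n hn k ⟨0, hn k⟩) (Xv n l ⟨0, hn l⟩)

/-- `𝔞^β_l = x^β (X^l_0)ᵀ` for a cocolor `β` and color `l`. -/
noncomputable def aM {C : ℕ} (n : Fin C → ℕ) (hn : ∀ c, 0 < n c) (β : Cocolor n)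
    (l : Fin C) : Matrix (Idx n) (Idx n) ℝ :=
  vecMulVec (xv n hn β.1.1 β.1.2) (Xv n l ⟨0, hn l⟩)

/-- `𝔟^β_γ = x^β (X^γ)ᵀ` for cocolors `β, γ`. -/
noncomputable def bM {C : ℕ} (n : Fin C → ℕ) (hn : ∀ c, 0 < n c) (β γ : Cocolor n) :
    Matrix (Idx n) (Idx n) ℝ :=
  vecMulVec (xv n hn β.1.1 β.1.2) (Xv n γ.1.1 γ.1.2)

/-- `𝔬^k_γ = x^k_0 (X^γ)ᵀ` for a color `k` and cocolor `γ`. -/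
noncomputable def oM {C : ℕ} (n : Fin C → ℕ) (hn : ∀ c, 0 < n c) (k : Fin C)
    (γ : Cocolor n) : Matrix (Idx n) (Idx n) ℝ :=
  vecMulVec (xv n hn k ⟨0, hn k⟩) (Xv n γ.1.1 γ.1.2)

/-- `𝖢 = Σ_c 𝔠^c_c`. -/
noncomputable def CCm {C : ℕ} (n : Fin C → ℕ) (hn : ∀ c, 0 < n c) :
    Matrix (Idx n) (Idx n) ℝ := ∑ c : Fin C, cM n hn c c

/-- `𝖡 = Σ_β 𝔟^β_β`. -/
noncomputable def BBm {C : ℕ} (n : Fin C → ℕ) (hn : ∀ c, 0 < n c) :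
    Matrix (Idx n) (Idx n) ℝ := ∑ β : Cocolor n, bM n hn β β

/-- The span of all commutators of elements of `U` and `V`. -/
noncomputable def bracketSpan {C : ℕ} (n : Fin C → ℕ)
    (U V : Submodule ℝ (Matrix (Idx n) (Idx n) ℝ)) :
    Submodule ℝ (Matrix (Idx n) (Idx n) ℝ) :=
  Submodule.span ℝ {M | ∃ x ∈ U, ∃ y ∈ V, M = x * y - y * x}

/-- The derived series of a subspace (with respect to the matrix commutator). -/
noncomputable def derSeries {C : ℕ} (n : Fin C → ℕ)
    (U : Submodule ℝ (Matrix (Idx n) (Idx n) ℝ)) :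
    ℕ → Submodule ℝ (Matrix (Idx n) (Idx n) ℝ)
  | 0 => U
  | (m + 1) => bracketSpan n (derSeries n U m) (derSeries n U m)


set_option linter.unusedSectionVars false

section VMV
variable {m : Type*} [Fintype m] [DecidableEq m]

lemma vmv_mul (u v w z : m → ℝ) :
    vecMulVec u v * vecMulVec w z = (v ⬝ᵥ w) • vecMulVec u z := by
  ext i j
  simp only [vecMulVec_apply, mul_apply, Matrix.smul_apply, dotProduct, smul_eq_mul,
    Finset.sum_mul]
  exact Finset.sum_congr rfl fun x _ => by ring

lemma vmv_mulVec (u v w : m → ℝ) : vecMulVec u v *ᵥ w = (v ⬝ᵥ w) • u := by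
  ext i
  simp only [vecMulVec_apply, mulVec, dotProduct, Pi.smul_apply, smul_eq_mul,
    Finset.sum_mul]
  exact Finset.sum_congr rfl fun x _ => by ring

lemma vecMul_vmv (w u v : m → ℝ) : w ᵥ* vecMulVec u v = (w ⬝ᵥ u) • v := by
  ext i
  simp only [vecMulVec_apply, vecMul, dotProduct, Pi.smul_apply, smul_eq_mul,
    Finset.sum_mul]
  exact Finset.sum_congr rfl fun x _ => by ring

lemma stdBasis_eq_vmv (a b : m) :
    Matrix.single a b (1:ℝ) = vecMulVec (Pi.single a 1) (Pi.single b 1) := by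
  ext i j
  simp only [vecMulVec_apply, Matrix.single_apply, Pi.single_apply]
  by_cases h1 : i = a <;> by_cases h2 : j = b <;> simp [h1, h2] <;> aesop

lemma vmv_sub_left (u u' v : m → ℝ) :
    vecMulVec (u - u') v = vecMulVec u v - vecMulVec u' v := by
  ext i j; simp [vecMulVec_apply, sub_mul]

lemma vmv_sum_right {ι : Type*} (s : Finset ι) (u : m → ℝ) (v : ι → m → ℝ) :
    vecMulVec u (∑ i ∈ s, v i) = ∑ i ∈ s, vecMulVec u (v i) := by
  ext i j
  rw [Matrix.sum_apply]
  simp [vecMulVec_apply, Finset.sum_apply, Finset.mul_sum]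

end VMV

namespace S18
variable {C : ℕ} (n : Fin C → ℕ) (hn : ∀ c, 0 < n c)

noncomputable def xc (k : Fin C) : Idx n → ℝ := xv n hn k ⟨0, hn k⟩
noncomputable def Xc (k : Fin C) : Idx n → ℝ := Xv n k ⟨0, hn k⟩
noncomputable def xb (β : Cocolor n) : Idx n → ℝ := xv n hn β.1.1 β.1.2
noncomputable def Xb (γ : Cocolor n) : Idx n → ℝ := Xv n γ.1.1 γ.1.2

lemma xc_eq (k : Fin C) : xc n hn k = Pi.single (⟨k, ⟨0, hn k⟩⟩ : Idx n) 1 := by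
  simp [xc, xv]

lemma xb_eq (β : Cocolor n) :
    xb n hn β = Pi.single (⟨β.1.1, β.1.2⟩ : Idx n) 1
      - Pi.single (⟨β.1.1, ⟨0, hn β.1.1⟩⟩ : Idx n) 1 := by
  simp [xb, xv, β.2]

lemma Xb_eq (γ : Cocolor n) : Xb n γ = Pi.single (⟨γ.1.1, γ.1.2⟩ : Idx n) 1 := by
  simp [Xb, Xv, γ.2]

lemma Xc_apply (k : Fin C) (p : Idx n) : Xc n hn k p = if p.1 = k then 1 else 0 := by
  rcases p with ⟨c, i⟩
  by_cases h : c = k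
  · subst h
    simp [Xc, Xv, Pi.single_apply, Sigma.mk.inj_iff]
  · simp only [Xc, Xv]
    rw [if_pos (by simp), Finset.sum_apply, if_neg h, Finset.sum_eq_zero]
    intro q _
    rw [Pi.single_apply, if_neg]
    exact fun hh => h (Sigma.mk.inj_iff.1 hh).1

lemma pair_cc (k l : Fin C) : Xc n hn l ⬝ᵥ xc n hn k = if k = l then 1 else 0 := by
  rw [xc_eq, dotProduct_single, mul_one, Xc_apply]

lemma pair_cb (l : Fin C) (β : Cocolor n) : Xc n hn l ⬝ᵥ xb n hn β = 0 := by
  rw [xb_eq, dotProduct_sub, dotProduct_single, dotProduct_single, Xc_apply, Xc_apply]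
  simp

lemma pair_bc (γ : Cocolor n) (k : Fin C) : Xb n γ ⬝ᵥ xc n hn k = 0 := by
  rw [xc_eq, Xb_eq, dotProduct_single, mul_one, Pi.single_apply]
  rw [if_neg]
  intro hh
  exact γ.2 (by simpa using (congrArg (fun p : Idx n => (p.2 : ℕ)) hh).symm)

lemma pair_bb (β γ : Cocolor n) : Xb n γ ⬝ᵥ xb n hn β = if β = γ then 1 else 0 := by
  rw [xb_eq, Xb_eq, dotProduct_sub, dotProduct_single, dotProduct_single]
  have h2 : (Pi.single (⟨γ.1.1, γ.1.2⟩ : Idx n) (1:ℝ) : Idx n → ℝ) ⟨β.1.1, ⟨0, hn β.1.1⟩⟩ = 0 := by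
    rw [Pi.single_apply, if_neg]
    intro hh
    exact γ.2 (by simpa using (congrArg (fun p : Idx n => (p.2 : ℕ)) hh).symm)
  rw [h2, Pi.single_apply]
  have h3 : ((⟨β.1.1, β.1.2⟩ : Idx n) = ⟨γ.1.1, γ.1.2⟩) ↔ β = γ := by
    constructor
    · intro hh
      ext1
      rw [← Sigma.eta β.1, ← Sigma.eta γ.1]
      exact hh
    · intro hh; rw [hh]
  simp [h3]

lemma Xc_eq (l : Fin C) : Xc n hn l = ∑ q : Fin (n l), Pi.single (⟨l, q⟩ : Idx n) 1 := by
  simp [Xc, Xv]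

lemma nu_eq (k l : Fin C) (σ : Fin (n l) → Fin (n k)) :
    nu n k l σ = ∑ j : Fin (n l),
      vecMulVec (Pi.single (⟨k, σ j⟩ : Idx n) 1) (Pi.single (⟨l, j⟩ : Idx n) 1) :=
  Finset.sum_congr rfl fun j _ => stdBasis_eq_vmv _ _

lemma vmv_single_Xc (k : Fin C) (a : Fin (n k)) (l : Fin C) :
    vecMulVec (Pi.single (⟨k, a⟩ : Idx n) 1) (Xc n hn l) = nu n k l (fun _ => a) := by
  rw [Xc_eq, vmv_sum_right, nu_eq]

lemma cM_vmv (k l : Fin C) : cM n hn k l = vecMulVec (xc n hn k) (Xc n hn l) := rfl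
lemma aM_vmv (β : Cocolor n) (l : Fin C) :
    aM n hn β l = vecMulVec (xb n hn β) (Xc n hn l) := rfl
lemma bM_vmv (β γ : Cocolor n) :
    bM n hn β γ = vecMulVec (xb n hn β) (Xb n γ) := rfl

lemma nu_mem (k l : Fin C) (σ : Fin (n l) → Fin (n k)) : nu n k l σ ∈ net n :=
  Submodule.subset_span ⟨k, l, σ, rfl⟩

lemma cM_mem (k l : Fin C) : cM n hn k l ∈ net n := by
  rw [cM_vmv, xc_eq, vmv_single_Xc]
  exact nu_mem n k l _

lemma aM_mem (β : Cocolor n) (l : Fin C) : aM n hn β l ∈ net n := by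
  rw [aM_vmv, xb_eq, vmv_sub_left, vmv_single_Xc, vmv_single_Xc]
  exact sub_mem (nu_mem n _ l _) (nu_mem n _ l _)

lemma nu_update (k l : Fin C) (z a : Fin (n k)) (i : Fin (n l)) :
    nu n k l (Function.update (fun _ => z) i a) =
      nu n k l (fun _ => z)
        - Matrix.single (⟨k, z⟩ : Idx n) (⟨l, i⟩ : Idx n) 1
        + Matrix.single (⟨k, a⟩ : Idx n) (⟨l, i⟩ : Idx n) 1 := by
  unfold nu
  rw [← Finset.sum_erase_add _ _ (Finset.mem_univ i),
    ← Finset.sum_erase_add (f := fun j => Matrix.single (⟨k, z⟩ : Idx n) (⟨l, j⟩ : Idx n) (1:ℝ)) _ (Finset.mem_univ i)]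
  have h1 : ∑ j ∈ Finset.univ.erase i,
      Matrix.single (⟨k, Function.update (fun _ => z) i a j⟩ : Idx n) (⟨l, j⟩ : Idx n) (1:ℝ)
      = ∑ j ∈ Finset.univ.erase i,
      Matrix.single (⟨k, z⟩ : Idx n) (⟨l, j⟩ : Idx n) (1:ℝ) :=
    Finset.sum_congr rfl fun j hj => by
      rw [Function.update_of_ne (Finset.ne_of_mem_erase hj)]
  rw [h1, Function.update_self]
  abel

lemma bM_eq (β γ : Cocolor n) :
    bM n hn β γ =
      Matrix.single (⟨β.1.1, β.1.2⟩ : Idx n) (⟨γ.1.1, γ.1.2⟩ : Idx n) 1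
      - Matrix.single (⟨β.1.1, ⟨0, hn β.1.1⟩⟩ : Idx n) (⟨γ.1.1, γ.1.2⟩ : Idx n) 1 := by
  rw [bM_vmv, xb_eq, Xb_eq, vmv_sub_left, ← stdBasis_eq_vmv, ← stdBasis_eq_vmv]

lemma bM_mem (β γ : Cocolor n) : bM n hn β γ ∈ net n := by
  have h := nu_update n β.1.1 γ.1.1 ⟨0, hn β.1.1⟩ β.1.2 γ.1.2
  have h2 : bM n hn β γ = nu n β.1.1 γ.1.1 (Function.update (fun _ => ⟨0, hn β.1.1⟩) γ.1.2 β.1.2)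
      - nu n β.1.1 γ.1.1 (fun _ => ⟨0, hn β.1.1⟩) := by
    rw [h, bM_eq]; abel
  rw [h2]
  exact sub_mem (nu_mem n _ _ _) (nu_mem n _ _ _)

lemma nu_mul_same (k l l' : Fin C) (σ : Fin (n l) → Fin (n k)) (τ : Fin (n l') → Fin (n l)) :
    nu n k l σ * nu n l l' τ = nu n k l' (fun j => σ (τ j)) := by
  unfold nu
  simp only [Finset.sum_mul, Finset.mul_sum]
  apply Finset.sum_congr rfl
  intro j' _
  rw [Finset.sum_eq_single (τ j')]
  · rw [Matrix.single_mul_single_same, one_mul]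
  · intro j _ hj
    apply Matrix.single_mul_single_of_ne
    exact fun hh => hj (eq_of_heq (Sigma.mk.inj_iff.1 hh).2)
  · intro hmem; exact absurd (Finset.mem_univ _) hmem

lemma nu_mul_ne (k l k' l' : Fin C) (h : l ≠ k') (σ : Fin (n l) → Fin (n k))
    (τ : Fin (n l') → Fin (n k')) : nu n k l σ * nu n k' l' τ = 0 := by
  unfold nu
  simp only [Finset.sum_mul, Finset.mul_sum]
  apply Finset.sum_eq_zero
  intro j _
  apply Finset.sum_eq_zero
  intro j' _
  apply Matrix.single_mul_single_of_ne
  exact fun hh => h (Sigma.mk.inj_iff.1 hh).1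

lemma net_mul_mem {x y : Matrix (Idx n) (Idx n) ℝ} (hx : x ∈ net n) (hy : y ∈ net n) :
    x * y ∈ net n := by
  have h := Submodule.mul_mem_mul hx hy
  rw [net, Submodule.span_mul_span] at h
  refine Submodule.span_le.2 ?_ h
  rintro M hM
  rw [Set.mem_mul] at hM
  obtain ⟨u, ⟨k, l, σ, rfl⟩, v, ⟨k', l', τ, rfl⟩, rfl⟩ := hM
  by_cases hc : l = k'
  · subst hc
    rw [nu_mul_same]
    exact nu_mem n _ _ _
  · rw [nu_mul_ne n _ _ _ _ hc]
    exact zero_mem _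

lemma D_le_net : bracketSpan n (net n) (net n) ≤ net n := by
  rw [bracketSpan]
  refine Submodule.span_le.2 ?_
  rintro M ⟨x, hx, y, hy, rfl⟩
  exact sub_mem (net_mul_mem n hx hy) (net_mul_mem n hy hx)
-- workhorse mulVec / vecMul lemmas
lemma mulVec_sum' (x : Matrix (Idx n) (Idx n) ℝ) {ι : Type*} (s : Finset ι)
    (f : ι → Idx n → ℝ) : x *ᵥ (∑ i ∈ s, f i) = ∑ i ∈ s, x *ᵥ f i := by
  rw [← Matrix.mulVecLin_apply, map_sum]
  rfl

lemma sum_mulVec' {ι : Type*} (s : Finset ι) (f : ι → Matrix (Idx n) (Idx n) ℝ)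
    (w : Idx n → ℝ) : (∑ i ∈ s, f i) *ᵥ w = ∑ i ∈ s, f i *ᵥ w := by
  ext p
  simp only [Matrix.mulVec, dotProduct, Finset.sum_apply, Matrix.sum_apply, Finset.sum_mul]
  exact Finset.sum_comm

lemma sum_vecMul' {ι : Type*} (s : Finset ι) (f : ι → Matrix (Idx n) (Idx n) ℝ)
    (w : Idx n → ℝ) : w ᵥ* (∑ i ∈ s, f i) = ∑ i ∈ s, w ᵥ* f i := by
  ext p
  simp only [Matrix.vecMul, dotProduct, Finset.sum_apply, Matrix.sum_apply, Finset.mul_sum]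
  exact Finset.sum_comm

lemma nu_mulVec (k' l' : Fin C) (σ : Fin (n l') → Fin (n k')) (w : Idx n → ℝ) :
    nu n k' l' σ *ᵥ w = ∑ j : Fin (n l'),
      w ⟨l', j⟩ • (Pi.single (⟨k', σ j⟩ : Idx n) (1:ℝ) : Idx n → ℝ) := by
  rw [nu_eq, sum_mulVec']
  exact Finset.sum_congr rfl fun j _ => by
    rw [vmv_mulVec, single_dotProduct, one_mul]

lemma vecMul_nu (w : Idx n → ℝ) (k' l' : Fin C) (σ : Fin (n l') → Fin (n k')) :
    w ᵥ* nu n k' l' σ = ∑ j : Fin (n l'),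
      w ⟨k', σ j⟩ • (Pi.single (⟨l', j⟩ : Idx n) (1:ℝ) : Idx n → ℝ) := by
  rw [nu_eq, sum_vecMul']
  exact Finset.sum_congr rfl fun j _ => by
    rw [vecMul_vmv, dotProduct_single, mul_one]

lemma Xc_vecMul_nu (k k' l' : Fin C) (σ : Fin (n l') → Fin (n k')) :
    Xc n hn k ᵥ* nu n k' l' σ = (if k' = k then (1:ℝ) else 0) • Xc n hn l' := by
  rw [vecMul_nu]
  have h : ∀ j : Fin (n l'), Xc n hn k ⟨k', σ j⟩ = if k' = k then (1:ℝ) else 0 :=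
    fun j => Xc_apply n hn k _
  simp_rw [h]
  rw [← Finset.smul_sum, Xc_eq]

lemma nu_mulVec_xc_same (k' l : Fin C) (σ : Fin (n l) → Fin (n k')) :
    nu n k' l σ *ᵥ xc n hn l = Pi.single (⟨k', σ ⟨0, hn l⟩⟩ : Idx n) 1 := by
  rw [nu_mulVec, xc_eq]
  rw [Finset.sum_eq_single ⟨0, hn l⟩]
  · rw [Pi.single_eq_same, one_smul]
  · intro j _ hj
    rw [Pi.single_apply, if_neg, zero_smul]
    exact fun hh => hj (eq_of_heq (Sigma.mk.inj_iff.1 hh).2)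
  · intro hmem; exact absurd (Finset.mem_univ _) hmem

lemma nu_mulVec_xc_ne (k' l' l : Fin C) (h : l' ≠ l) (σ : Fin (n l') → Fin (n k')) :
    nu n k' l' σ *ᵥ xc n hn l = 0 := by
  rw [nu_mulVec, xc_eq]
  rw [Finset.sum_eq_zero]
  intro j _
  rw [Pi.single_apply, if_neg, zero_smul]
  exact fun hh => h (Sigma.mk.inj_iff.1 hh).1

lemma nu_mulVec_xb_same (k' l : Fin C) (σ : Fin (n l) → Fin (n k')) (i : Fin (n l))
    (hi : (i : ℕ) ≠ 0) :
    nu n k' l σ *ᵥ xb n hn ⟨⟨l, i⟩, hi⟩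
      = Pi.single (⟨k', σ i⟩ : Idx n) 1 - Pi.single (⟨k', σ ⟨0, hn l⟩⟩ : Idx n) 1 := by
  rw [nu_mulVec, xb_eq]
  simp only [Pi.sub_apply, sub_smul]
  rw [Finset.sum_sub_distrib]
  congr 1
  · rw [Finset.sum_eq_single i]
    · rw [Pi.single_eq_same, one_smul]
    · intro j _ hj
      rw [Pi.single_apply, if_neg, zero_smul]
      exact fun hh => hj (eq_of_heq (Sigma.mk.inj_iff.1 hh).2)
    · intro hmem; exact absurd (Finset.mem_univ _) hmem
  · rw [Finset.sum_eq_single ⟨0, hn l⟩]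
    · rw [Pi.single_eq_same, one_smul]
    · intro j _ hj
      rw [Pi.single_apply, if_neg, zero_smul]
      exact fun hh => hj (eq_of_heq (Sigma.mk.inj_iff.1 hh).2)
    · intro hmem; exact absurd (Finset.mem_univ _) hmem

lemma nu_mulVec_xb_ne (k' l' : Fin C) (σ : Fin (n l') → Fin (n k')) (β : Cocolor n)
    (h : l' ≠ β.1.1) : nu n k' l' σ *ᵥ xb n hn β = 0 := by
  rw [nu_mulVec, xb_eq]
  rw [Finset.sum_eq_zero]
  intro j _
  have h1 : (Pi.single (⟨β.1.1, β.1.2⟩ : Idx n) (1:ℝ) : Idx n → ℝ) ⟨l', j⟩ = 0 := by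
    rw [Pi.single_apply, if_neg]
    exact fun hh => h (Sigma.mk.inj_iff.1 hh).1
  have h2 : (Pi.single (⟨β.1.1, ⟨0, hn β.1.1⟩⟩ : Idx n) (1:ℝ) : Idx n → ℝ) ⟨l', j⟩ = 0 := by
    rw [Pi.single_apply, if_neg]
    exact fun hh => h (Sigma.mk.inj_iff.1 hh).1
  simp [h1, h2]

lemma vecMul_smul' (w : Idx n → ℝ) (r : ℝ) (A : Matrix (Idx n) (Idx n) ℝ) :
    w ᵥ* (r • A) = r • (w ᵥ* A) := by
  ext p
  simp [Matrix.vecMul, dotProduct, Finset.mul_sum, mul_left_comm]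

lemma Xb_dot (γ : Cocolor n) (v : Idx n → ℝ) : Xb n γ ⬝ᵥ v = v γ.1 := by
  rw [Xb_eq, single_dotProduct, one_mul]

lemma cocolor_sum (k' : Fin C) (a : Fin (n k')) :
    ∑ γ : Cocolor n, ((Pi.single (⟨k', a⟩ : Idx n) (1:ℝ) : Idx n → ℝ) γ.1) • xb n hn γ
      = Pi.single (⟨k', a⟩ : Idx n) 1 - Pi.single (⟨k', ⟨0, hn k'⟩⟩ : Idx n) 1 := by
  by_cases ha : (a : ℕ) = 0
  · have ha' : a = ⟨0, hn k'⟩ := Fin.ext ha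
    subst ha'
    rw [sub_self, Finset.sum_eq_zero]
    intro γ _
    rw [Pi.single_apply, if_neg, zero_smul]
    exact fun hh => γ.2 (by simpa using congrArg (fun p : Idx n => (p.2 : ℕ)) hh)
  · rw [Finset.sum_eq_single (⟨⟨k', a⟩, ha⟩ : Cocolor n)]
    · rw [Pi.single_eq_same, one_smul, xb_eq]
    · intro γ _ hγ
      rw [Pi.single_apply, if_neg, zero_smul]
      exact fun hh => hγ (Subtype.ext hh)
    · intro hmem; exact absurd (Finset.mem_univ _) hmem

lemma rowC (x : Matrix (Idx n) (Idx n) ℝ) (hx : x ∈ net n) (k : Fin C) :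
    Xc n hn k ᵥ* x = ∑ l, (Xc n hn k ⬝ᵥ (x *ᵥ xc n hn l)) • Xc n hn l := by
  induction hx using Submodule.span_induction with
  | mem M hM =>
    obtain ⟨k', l', σ, rfl⟩ := hM
    rw [Xc_vecMul_nu]
    rw [Finset.sum_eq_single l']
    · rw [nu_mulVec_xc_same, dotProduct_single, mul_one, Xc_apply]
    · intro l _ hl
      rw [nu_mulVec_xc_ne n hn k' l' l (Ne.symm hl), dotProduct_zero, zero_smul]
    · intro hmem; exact absurd (Finset.mem_univ _) hmem
  | zero => simp [Matrix.vecMul_zero, Matrix.zero_mulVec]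
  | add a b ha hb iha ihb =>
    rw [Matrix.vecMul_add, iha, ihb, ← Finset.sum_add_distrib]
    refine Finset.sum_congr rfl fun l _ => ?_
    rw [Matrix.add_mulVec, dotProduct_add, add_smul]
  | smul r a ha iha =>
    rw [vecMul_smul', iha, Finset.smul_sum]
    refine Finset.sum_congr rfl fun l _ => ?_
    rw [Matrix.smul_mulVec, dotProduct_smul, smul_eq_mul, mul_smul]

lemma colB (x : Matrix (Idx n) (Idx n) ℝ) (hx : x ∈ net n) (β : Cocolor n) :
    x *ᵥ xb n hn β = ∑ γ : Cocolor n, (Xb n γ ⬝ᵥ (x *ᵥ xb n hn β)) • xb n hn γ := by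
  induction hx using Submodule.span_induction with
  | mem M hM =>
    obtain ⟨k', l', σ, rfl⟩ := hM
    obtain ⟨⟨l, i⟩, hi⟩ := β
    by_cases hl : l' = l
    · subst hl
      rw [nu_mulVec_xb_same n hn k' l' σ i hi]
      simp_rw [Xb_dot]
      simp only [Pi.sub_apply, sub_smul]
      rw [Finset.sum_sub_distrib, cocolor_sum, cocolor_sum]
      abel
    · rw [nu_mulVec_xb_ne n hn k' l' σ _ hl]
      simp
  | zero => simp [Matrix.zero_mulVec]
  | add a b ha hb iha ihb =>
    rw [Matrix.add_mulVec]
    conv_lhs => rw [iha, ihb]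
    rw [← Finset.sum_add_distrib]
    refine Finset.sum_congr rfl fun γ _ => ?_
    rw [dotProduct_add, add_smul]
  | smul r a ha iha =>
    rw [Matrix.smul_mulVec]
    conv_lhs => rw [iha]
    rw [Finset.smul_sum]
    refine Finset.sum_congr rfl fun γ _ => ?_
    rw [dotProduct_smul, smul_eq_mul, mul_smul]

lemma brk_mem {x y : Matrix (Idx n) (Idx n) ℝ} (hx : x ∈ net n) (hy : y ∈ net n) :
    x * y - y * x ∈ bracketSpan n (net n) (net n) :=
  Submodule.subset_span ⟨x, hx, y, hy, rfl⟩

lemma aM_in_D (β : Cocolor n) (l : Fin C) :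
    aM n hn β l ∈ bracketSpan n (net n) (net n) := by
  have h : aM n hn β l = aM n hn β l * cM n hn l l - cM n hn l l * aM n hn β l := by
    rw [aM_vmv, cM_vmv, vmv_mul, vmv_mul, pair_cc, pair_cb]
    simp
  rw [h]
  exact brk_mem n (aM_mem n hn β l) (cM_mem n hn l l)

lemma cM_offdiag_in_D (k l : Fin C) (h : k ≠ l) :
    cM n hn k l ∈ bracketSpan n (net n) (net n) := by
  have heq : cM n hn k l = cM n hn k l * cM n hn l l - cM n hn l l * cM n hn k l := by
    rw [cM_vmv, cM_vmv, vmv_mul, vmv_mul, pair_cc, pair_cc, if_pos rfl, if_neg h]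
    simp
  rw [heq]
  exact brk_mem n (cM_mem n hn k l) (cM_mem n hn l l)

lemma cM_diff_in_D (k l : Fin C) :
    cM n hn k k - cM n hn l l ∈ bracketSpan n (net n) (net n) := by
  have heq : cM n hn k k - cM n hn l l = cM n hn k l * cM n hn l k - cM n hn l k * cM n hn k l := by
    rw [cM_vmv, cM_vmv, cM_vmv, cM_vmv, vmv_mul, vmv_mul, pair_cc, pair_cc, if_pos rfl,
      if_pos rfl]
    simp
  rw [heq]
  exact brk_mem n (cM_mem n hn k l) (cM_mem n hn l k)

lemma bM_offdiag_in_D (β γ : Cocolor n) (h : β ≠ γ) :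
    bM n hn β γ ∈ bracketSpan n (net n) (net n) := by
  have heq : bM n hn β γ = bM n hn β γ * bM n hn γ γ - bM n hn γ γ * bM n hn β γ := by
    rw [bM_vmv, bM_vmv, vmv_mul, vmv_mul, pair_bb, pair_bb, if_pos rfl, if_neg h]
    simp
  rw [heq]
  exact brk_mem n (bM_mem n hn β γ) (bM_mem n hn γ γ)

lemma bM_diff_in_D (β γ : Cocolor n) :
    bM n hn β β - bM n hn γ γ ∈ bracketSpan n (net n) (net n) := by
  have heq : bM n hn β β - bM n hn γ γ = bM n hn β γ * bM n hn γ β - bM n hn γ β * bM n hn β γ := by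
    rw [bM_vmv, bM_vmv, bM_vmv, bM_vmv, vmv_mul, vmv_mul, pair_bb, pair_bb, if_pos rfl,
      if_pos rfl]
    simp
  rw [heq]
  exact brk_mem n (bM_mem n hn β γ) (bM_mem n hn γ β)

-- the linear functionals
noncomputable def phiC : Matrix (Idx n) (Idx n) ℝ →ₗ[ℝ] ℝ where
  toFun M := ∑ k, Xc n hn k ⬝ᵥ (M *ᵥ xc n hn k)
  map_add' x y := by
    rw [← Finset.sum_add_distrib]
    exact Finset.sum_congr rfl fun k _ => by rw [Matrix.add_mulVec, dotProduct_add]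
  map_smul' r x := by
    simp only [RingHom.id_apply, smul_eq_mul, Finset.mul_sum]
    exact Finset.sum_congr rfl fun k _ => by
      rw [Matrix.smul_mulVec, dotProduct_smul, smul_eq_mul]

noncomputable def phiB : Matrix (Idx n) (Idx n) ℝ →ₗ[ℝ] ℝ where
  toFun M := ∑ β : Cocolor n, Xb n β ⬝ᵥ (M *ᵥ xb n hn β)
  map_add' x y := by
    rw [← Finset.sum_add_distrib]
    exact Finset.sum_congr rfl fun k _ => by rw [Matrix.add_mulVec, dotProduct_add]
  map_smul' r x := by
    simp only [RingHom.id_apply, smul_eq_mul, Finset.mul_sum]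
    exact Finset.sum_congr rfl fun k _ => by
      rw [Matrix.smul_mulVec, dotProduct_smul, smul_eq_mul]

lemma phiC_apply (M : Matrix (Idx n) (Idx n) ℝ) :
    phiC n hn M = ∑ k, Xc n hn k ⬝ᵥ (M *ᵥ xc n hn k) := rfl

lemma phiB_apply (M : Matrix (Idx n) (Idx n) ℝ) :
    phiB n hn M = ∑ β : Cocolor n, Xb n β ⬝ᵥ (M *ᵥ xb n hn β) := rfl

lemma phiC_vmv (u v : Idx n → ℝ) :
    phiC n hn (vecMulVec u v) = ∑ k, (v ⬝ᵥ xc n hn k) * (Xc n hn k ⬝ᵥ u) := by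
  rw [phiC_apply]
  exact Finset.sum_congr rfl fun k _ => by
    rw [vmv_mulVec, dotProduct_smul, smul_eq_mul]

lemma phiB_vmv (u v : Idx n → ℝ) :
    phiB n hn (vecMulVec u v) = ∑ γ : Cocolor n, (v ⬝ᵥ xb n hn γ) * (Xb n γ ⬝ᵥ u) := by
  rw [phiB_apply]
  exact Finset.sum_congr rfl fun γ _ => by
    rw [vmv_mulVec, dotProduct_smul, smul_eq_mul]

lemma phiC_cM (k l : Fin C) : phiC n hn (cM n hn k l) = if k = l then 1 else 0 := by
  rw [cM_vmv, phiC_vmv]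
  rw [Finset.sum_eq_single l]
  · rw [pair_cc, pair_cc, if_pos rfl, one_mul]
  · intro m _ hm
    rw [pair_cc, if_neg hm, zero_mul]
  · intro hmem; exact absurd (Finset.mem_univ _) hmem

lemma phiC_aM (β : Cocolor n) (l : Fin C) : phiC n hn (aM n hn β l) = 0 := by
  rw [aM_vmv, phiC_vmv]
  exact Finset.sum_eq_zero fun m _ => by rw [pair_cb, mul_zero]

lemma phiC_bM (β γ : Cocolor n) : phiC n hn (bM n hn β γ) = 0 := by
  rw [bM_vmv, phiC_vmv]
  exact Finset.sum_eq_zero fun m _ => by rw [pair_bc, zero_mul]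

lemma phiB_cM (k l : Fin C) : phiB n hn (cM n hn k l) = 0 := by
  rw [cM_vmv, phiB_vmv]
  exact Finset.sum_eq_zero fun γ _ => by rw [pair_cb, zero_mul]

lemma phiB_bM (β γ : Cocolor n) : phiB n hn (bM n hn β γ) = if β = γ then 1 else 0 := by
  rw [bM_vmv, phiB_vmv]
  rw [Finset.sum_eq_single γ]
  · rw [pair_bb, pair_bb, if_pos rfl, one_mul]
  · intro δ _ hδ
    rw [pair_bb, if_neg hδ, zero_mul]
  · intro hmem; exact absurd (Finset.mem_univ _) hmem

lemma phiC_CCm : phiC n hn (CCm n hn) = C := by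
  rw [CCm, map_sum]
  rw [Finset.sum_congr rfl fun k (_ : k ∈ Finset.univ) => phiC_cM n hn k k]
  simp

lemma phiB_CCm : phiB n hn (CCm n hn) = 0 := by
  rw [CCm, map_sum]
  exact Finset.sum_eq_zero fun k _ => phiB_cM n hn k k

lemma phiC_BBm : phiC n hn (BBm n hn) = 0 := by
  rw [BBm, map_sum]
  exact Finset.sum_eq_zero fun β _ => phiC_bM n hn β β

lemma phiB_BBm : phiB n hn (BBm n hn) = Fintype.card (Cocolor n) := by
  rw [BBm, map_sum]
  rw [Finset.sum_congr rfl fun β (_ : β ∈ Finset.univ) => phiB_bM n hn β β]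
  simp [Finset.card_univ]

lemma dot_sum' {ι : Type*} (s : Finset ι) (v : Idx n → ℝ) (f : ι → Idx n → ℝ) :
    v ⬝ᵥ (∑ i ∈ s, f i) = ∑ i ∈ s, v ⬝ᵥ f i := by
  simp only [dotProduct, Finset.sum_apply, Finset.mul_sum]
  exact Finset.sum_comm

lemma sum_dot' {ι : Type*} (s : Finset ι) (v : Idx n → ℝ) (f : ι → Idx n → ℝ) :
    (∑ i ∈ s, f i) ⬝ᵥ v = ∑ i ∈ s, f i ⬝ᵥ v := by
  simp only [dotProduct, Finset.sum_apply, Finset.sum_mul]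
  exact Finset.sum_comm

lemma phiC_comm {x y : Matrix (Idx n) (Idx n) ℝ} (hx : x ∈ net n) (hy : y ∈ net n) :
    phiC n hn (x * y) = phiC n hn (y * x) := by
  have key : ∀ u v : Matrix (Idx n) (Idx n) ℝ, u ∈ net n → v ∈ net n →
      phiC n hn (u * v) = ∑ k, ∑ l, (Xc n hn k ⬝ᵥ (u *ᵥ xc n hn l))
        * (Xc n hn l ⬝ᵥ (v *ᵥ xc n hn k)) := by
    intro u v hu hv
    rw [phiC_apply]
    refine Finset.sum_congr rfl fun k _ => ?_
    rw [← Matrix.mulVec_mulVec, dotProduct_mulVec, rowC n hn u hu k, sum_dot']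
    refine Finset.sum_congr rfl fun l _ => ?_
    rw [smul_dotProduct, smul_eq_mul, dotProduct_mulVec]
  rw [key x y hx hy, key y x hy hx, Finset.sum_comm]
  exact Finset.sum_congr rfl fun k _ => Finset.sum_congr rfl fun l _ => mul_comm _ _

lemma phiB_comm {x y : Matrix (Idx n) (Idx n) ℝ} (hx : x ∈ net n) (hy : y ∈ net n) :
    phiB n hn (x * y) = phiB n hn (y * x) := by
  have key : ∀ u v : Matrix (Idx n) (Idx n) ℝ, u ∈ net n → v ∈ net n →
      phiB n hn (u * v) = ∑ β : Cocolor n, ∑ γ : Cocolor n,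
        (Xb n γ ⬝ᵥ (v *ᵥ xb n hn β)) * (Xb n β ⬝ᵥ (u *ᵥ xb n hn γ)) := by
    intro u v hu hv
    rw [phiB_apply]
    refine Finset.sum_congr rfl fun β _ => ?_
    rw [← Matrix.mulVec_mulVec]
    conv_lhs => rw [colB n hn v hv β]
    rw [mulVec_sum', dot_sum']
    refine Finset.sum_congr rfl fun γ _ => ?_
    rw [Matrix.mulVec_smul, dotProduct_smul, smul_eq_mul]
  rw [key x y hx hy, key y x hy hx, Finset.sum_comm]
  exact Finset.sum_congr rfl fun β _ => Finset.sum_congr rfl fun γ _ => mul_comm _ _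

lemma phiC_D_zero {z : Matrix (Idx n) (Idx n) ℝ}
    (hz : z ∈ bracketSpan n (net n) (net n)) : phiC n hn z = 0 := by
  have hle : bracketSpan n (net n) (net n) ≤ LinearMap.ker (phiC n hn) := by
    rw [bracketSpan]
    refine Submodule.span_le.2 ?_
    rintro M ⟨x, hx, y, hy, rfl⟩
    rw [SetLike.mem_coe, LinearMap.mem_ker, map_sub, phiC_comm n hn hx hy, sub_self]
  exact LinearMap.mem_ker.1 (hle hz)

lemma phiB_D_zero {z : Matrix (Idx n) (Idx n) ℝ}
    (hz : z ∈ bracketSpan n (net n) (net n)) : phiB n hn z = 0 := by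
  have hle : bracketSpan n (net n) (net n) ≤ LinearMap.ker (phiB n hn) := by
    rw [bracketSpan]
    refine Submodule.span_le.2 ?_
    rintro M ⟨x, hx, y, hy, rfl⟩
    rw [SetLike.mem_coe, LinearMap.mem_ker, map_sub, phiB_comm n hn hx hy, sub_self]
  exact LinearMap.mem_ker.1 (hle hz)

lemma cocolor_nonempty (hCN : C < ∑ c, n c) : Nonempty (Cocolor n) := by
  have h1 : ∃ c, 1 < n c := by
    by_contra hh
    push_neg at hh
    have h2 : ∑ c, n c ≤ ∑ _c : Fin C, 1 := Finset.sum_le_sum fun c _ => hh c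
    simp only [Finset.sum_const, Finset.card_univ, Fintype.card_fin, smul_eq_mul,
      mul_one] at h2
    omega
  obtain ⟨c, hc⟩ := h1
  exact ⟨⟨⟨c, ⟨1, hc⟩⟩, one_ne_zero⟩⟩

noncomputable def PP : Submodule ℝ (Matrix (Idx n) (Idx n) ℝ) :=
  bracketSpan n (net n) (net n) ⊔ Submodule.span ℝ {BBm n hn, CCm n hn}

lemma cM_in_P (hC : 0 < C) (k l : Fin C) : cM n hn k l ∈ PP n hn := by
  by_cases h : k = l
  · subst h
    have hsum : (C : ℝ) • cM n hn k k = CCm n hn + ∑ m, (cM n hn k k - cM n hn m m) := by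
      rw [Finset.sum_sub_distrib, Finset.sum_const, Finset.card_univ, Fintype.card_fin,
        CCm, ← Nat.cast_smul_eq_nsmul ℝ]
      abel
    have h1 : cM n hn k k = (C : ℝ)⁻¹ • ((C : ℝ) • cM n hn k k) := by
      rw [smul_smul, inv_mul_cancel₀ (by exact_mod_cast hC.ne' : (C:ℝ) ≠ 0), one_smul]
    rw [h1, hsum]
    refine Submodule.smul_mem _ _ (Submodule.add_mem _ ?_ ?_)
    · exact Submodule.mem_sup_right (Submodule.subset_span (by simp))
    · exact Submodule.mem_sup_left (Submodule.sum_mem _ fun m _ => cM_diff_in_D n hn k m)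
  · exact Submodule.mem_sup_left (cM_offdiag_in_D n hn k l h)

lemma bM_in_P (hNE : Nonempty (Cocolor n)) (β γ : Cocolor n) : bM n hn β γ ∈ PP n hn := by
  by_cases h : β = γ
  · subst h
    have hcard : (0:ℕ) < Fintype.card (Cocolor n) := Fintype.card_pos
    have hsum : (Fintype.card (Cocolor n) : ℝ) • bM n hn β β
        = BBm n hn + ∑ γ : Cocolor n, (bM n hn β β - bM n hn γ γ) := by
      rw [Finset.sum_sub_distrib, Finset.sum_const, Finset.card_univ,
        BBm, ← Nat.cast_smul_eq_nsmul ℝ]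
      abel
    have h1 : bM n hn β β = (Fintype.card (Cocolor n) : ℝ)⁻¹
        • ((Fintype.card (Cocolor n) : ℝ) • bM n hn β β) := by
      rw [smul_smul, inv_mul_cancel₀ (by exact_mod_cast hcard.ne' : ((Fintype.card (Cocolor n)):ℝ) ≠ 0), one_smul]
    rw [h1, hsum]
    refine Submodule.smul_mem _ _ (Submodule.add_mem _ ?_ ?_)
    · exact Submodule.mem_sup_right (Submodule.subset_span (by simp))
    · exact Submodule.mem_sup_left (Submodule.sum_mem _ fun δ _ => bM_diff_in_D n hn β δ)
  · exact Submodule.mem_sup_left (bM_offdiag_in_D n hn β γ h)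

lemma vmv_sub_right (u v w : Idx n → ℝ) :
    vecMulVec u (v - w) = vecMulVec u v - vecMulVec u w := by
  ext i j; simp [vecMulVec_apply, mul_sub]

lemma vmv_xb_single_in_P (hC : 0 < C) (hNE : Nonempty (Cocolor n)) (β : Cocolor n)
    (l : Fin C) (j : Fin (n l)) :
    vecMulVec (xb n hn β) (Pi.single (⟨l, j⟩ : Idx n) 1) ∈ PP n hn := by
  by_cases hj : (j : ℕ) = 0
  · have hj' : j = ⟨0, hn l⟩ := Fin.ext hj
    rw [hj']
    have hXc : (Pi.single (⟨l, ⟨0, hn l⟩⟩ : Idx n) (1:ℝ) : Idx n → ℝ)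
        = Xc n hn l - ∑ q ∈ Finset.univ.erase ⟨0, hn l⟩, Pi.single (⟨l, q⟩ : Idx n) 1 := by
      rw [Xc_eq, ← Finset.add_sum_erase _ _ (Finset.mem_univ (⟨0, hn l⟩ : Fin (n l)))]
      abel
    rw [hXc, vmv_sub_right, vmv_sum_right]
    refine Submodule.sub_mem _ ?_ (Submodule.sum_mem _ fun q hq => ?_)
    · exact Submodule.mem_sup_left (aM_in_D n hn β l)
    · have hq0 : (q : ℕ) ≠ 0 := by
        intro hq0
        exact (Finset.mem_erase.1 hq).1 (Fin.ext hq0)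
      have : vecMulVec (xb n hn β) (Pi.single (⟨l, q⟩ : Idx n) 1)
          = bM n hn β ⟨⟨l, q⟩, hq0⟩ := by
        rw [bM_vmv, Xb_eq]
      rw [this]
      exact bM_in_P n hn hNE β ⟨⟨l, q⟩, hq0⟩
  · have : vecMulVec (xb n hn β) (Pi.single (⟨l, j⟩ : Idx n) 1)
        = bM n hn β ⟨⟨l, j⟩, hj⟩ := by
      rw [bM_vmv, Xb_eq]
    rw [this]
    exact bM_in_P n hn hNE β ⟨⟨l, j⟩, hj⟩

lemma nu_in_P (hC : 0 < C) (hNE : Nonempty (Cocolor n)) (k l : Fin C)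
    (σ : Fin (n l) → Fin (n k)) : nu n k l σ ∈ PP n hn := by
  have hdecomp : nu n k l σ = cM n hn k l + ∑ j : Fin (n l),
      (Matrix.single (⟨k, σ j⟩ : Idx n) (⟨l, j⟩ : Idx n) 1
        - Matrix.single (⟨k, ⟨0, hn k⟩⟩ : Idx n) (⟨l, j⟩ : Idx n) 1) := by
    rw [cM_vmv, xc_eq, vmv_single_Xc]
    unfold nu
    rw [Finset.sum_sub_distrib]
    abel
  rw [hdecomp]
  refine Submodule.add_mem _ (cM_in_P n hn hC k l) (Submodule.sum_mem _ fun j _ => ?_)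
  by_cases hσ : ((σ j : ℕ)) = 0
  · have hσ' : σ j = ⟨0, hn k⟩ := Fin.ext hσ
    rw [hσ', sub_self]
    exact zero_mem _
  · have hT : Matrix.single (⟨k, σ j⟩ : Idx n) (⟨l, j⟩ : Idx n) (1:ℝ)
        - Matrix.single (⟨k, ⟨0, hn k⟩⟩ : Idx n) (⟨l, j⟩ : Idx n) 1
        = vecMulVec (xb n hn ⟨⟨k, σ j⟩, hσ⟩) (Pi.single (⟨l, j⟩ : Idx n) 1) := by
      rw [xb_eq, vmv_sub_left, ← stdBasis_eq_vmv, ← stdBasis_eq_vmv]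
    rw [hT]
    exact vmv_xb_single_in_P n hn hC hNE ⟨⟨k, σ j⟩, hσ⟩ l j

lemma net_le_P (hC : 0 < C) (hNE : Nonempty (Cocolor n)) : net n ≤ PP n hn := by
  rw [net]
  refine Submodule.span_le.2 ?_
  rintro M ⟨k, l, σ, rfl⟩
  exact nu_in_P n hn hC hNE k l σ

end S18

/-- The derived ideal `[net, net]` has codimension 2 in `net_{C,N}`, and the classes of
`𝖡` and `𝖢` form a basis of the quotient: every element of `net_{C,N}` is, modulo the
derived ideal, a unique linear combination of `𝖡` and `𝖢`. -/
theorem stmt18 {C : ℕ} (hC : 0 < C) (n : Fin C → ℕ) (hn : ∀ c, 0 < n c)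
    (hCN : C < ∑ c, n c) :
    bracketSpan n (net n) (net n) ≤ net n ∧
    Module.finrank ℝ ↥(net n)
      = Module.finrank ℝ ↥(bracketSpan n (net n) (net n)) + 2 ∧
    ∀ x ∈ net n, ∃! p : ℝ × ℝ,
      x - p.1 • BBm n hn - p.2 • CCm n hn ∈ bracketSpan n (net n) (net n) := by
  have hNE : Nonempty (Cocolor n) := S18.cocolor_nonempty n hCN
  haveI := hNE
  have hcard : ((Fintype.card (Cocolor n)) : ℝ) ≠ 0 := by
    exact_mod_cast (Fintype.card_pos (α := Cocolor n)).ne'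
  have hCr : (C : ℝ) ≠ 0 := by exact_mod_cast hC.ne'
  have hDnet : bracketSpan n (net n) (net n) ≤ net n := S18.D_le_net n
  have hBmem : BBm n hn ∈ net n := Submodule.sum_mem _ fun β _ => S18.bM_mem n hn β β
  have hCmem : CCm n hn ∈ net n := Submodule.sum_mem _ fun c _ => S18.cM_mem n hn c c
  have hSle : Submodule.span ℝ {BBm n hn, CCm n hn} ≤ net n := by
    refine Submodule.span_le.2 ?_
    rintro z (rfl | rfl)
    · exact hBmem
    · exact hCmem
  have hnet_eq : net n
      = bracketSpan n (net n) (net n) ⊔ Submodule.span ℝ {BBm n hn, CCm n hn} := by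
    refine le_antisymm ?_ (sup_le hDnet hSle)
    have h1 := S18.net_le_P n hn hC hNE
    rwa [S18.PP] at h1
  -- evaluation of the functionals on combinations
  have phiBval : ∀ a b : ℝ, S18.phiB n hn (a • BBm n hn + b • CCm n hn)
      = a * (Fintype.card (Cocolor n)) := by
    intro a b
    rw [map_add, _root_.map_smul, _root_.map_smul, S18.phiB_BBm, S18.phiB_CCm]
    simp
  have phiCval : ∀ a b : ℝ, S18.phiC n hn (a • BBm n hn + b • CCm n hn) = b * C := by
    intro a b
    rw [map_add, _root_.map_smul, _root_.map_smul, S18.phiC_BBm, S18.phiC_CCm]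
    simp
  have comb_zero : ∀ a b : ℝ, a • BBm n hn + b • CCm n hn ∈ bracketSpan n (net n) (net n)
      → a = 0 ∧ b = 0 := by
    intro a b hab
    have h1 := S18.phiB_D_zero n hn hab
    have h2 := S18.phiC_D_zero n hn hab
    rw [phiBval] at h1
    rw [phiCval] at h2
    constructor
    · rcases mul_eq_zero.1 h1 with h | h
      · exact h
      · exact absurd h hcard
    · rcases mul_eq_zero.1 h2 with h | h
      · exact h
      · exact absurd h hCr
  refine ⟨hDnet, ?_, ?_⟩
  · -- finrank statement
    have hindep : LinearIndependent ℝ ![BBm n hn, CCm n hn] := by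
      refine LinearIndependent.pair_iff.2 fun s t hst => ?_
      exact comb_zero s t (by rw [hst]; exact zero_mem _)
    have hrange : Set.range ![BBm n hn, CCm n hn] = {BBm n hn, CCm n hn} := by
      ext z
      simp [Fin.exists_fin_two, eq_comm, or_comm]
    have hrank2 : Module.finrank ℝ ↥(Submodule.span ℝ {BBm n hn, CCm n hn}) = 2 := by
      rw [← hrange, finrank_span_eq_card hindep]
      simp
    have hinf : bracketSpan n (net n) (net n) ⊓ Submodule.span ℝ {BBm n hn, CCm n hn} = ⊥ := by
      rw [eq_bot_iff]
      rintro z hz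
      obtain ⟨hzD, hzS⟩ := Submodule.mem_inf.1 hz
      obtain ⟨a, b, rfl⟩ := Submodule.mem_span_pair.1 hzS
      obtain ⟨ha, hb⟩ := comb_zero a b hzD
      rw [ha, hb]
      simp
    have hsum := Submodule.finrank_sup_add_finrank_inf_eq
      (bracketSpan n (net n) (net n)) (Submodule.span ℝ {BBm n hn, CCm n hn})
    rw [hinf, finrank_bot, add_zero, hrank2] at hsum
    have hfr := congrArg
      (fun U : Submodule ℝ (Matrix (Idx n) (Idx n) ℝ) => Module.finrank ℝ ↥U) hnet_eq
    rw [hfr, hsum]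
  · -- existence and uniqueness
    intro x hx
    rw [hnet_eq] at hx
    obtain ⟨d, hd, s, hs, hds⟩ := Submodule.mem_sup.1 hx
    obtain ⟨a, b, rfl⟩ := Submodule.mem_span_pair.1 hs
    have hxd : x - a • BBm n hn - b • CCm n hn = d := by
      rw [← hds]; abel
    refine ⟨(a, b), ?_, ?_⟩
    · simpa [hxd] using hd
    · rintro ⟨p, q⟩ hpq
      simp only at hpq
      have hd' : x - a • BBm n hn - b • CCm n hn ∈ bracketSpan n (net n) (net n) := by
        rw [hxd]; exact hd
      have hz : (a - p) • BBm n hn + (b - q) • CCm n hn ∈ bracketSpan n (net n) (net n) := by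
        have hsub := Submodule.sub_mem _ hpq hd'
        have heq : (x - p • BBm n hn - q • CCm n hn)
            - (x - a • BBm n hn - b • CCm n hn)
            = (a - p) • BBm n hn + (b - q) • CCm n hn := by
          rw [sub_smul, sub_smul]; abel
        rwa [heq] at hsub
      obtain ⟨ha, hb⟩ := comb_zero _ _ hz
      have hpa : p = a := by linarith [sub_eq_zero.1 ha]
      have hqb : q = b := by linarith [sub_eq_zero.1 hb]
      rw [hpa, hqb]
end

section
/- Assume 1 ≤ C ≤ N−1. Let 𝖢 = Σ_{c=1}^C 𝔠^c_c and 𝖡 = Σ_β 𝔟^β_β. Define the subspaces P = ℝ·𝖡 + span{𝔠^{c₁}_{c₂} : c₁, c₂ colors} and Q = ℝ·𝖢 + span{𝔟^{β₁}_{β₂} : β₁, β₂ cocolors} of net_{C,N}. Then P and Q form a dual pair in net_{C,N}: for x ∈ net_{C,N}, one has [x, p] = 0 for all p ∈ P if and only if x ∈ Q, and [x, q] = 0 for all q ∈ Q if and only if x ∈ P; i.e. the centralizer of P in net_{C,N} equals Q and the centralizer of Q in net_{C,N} equals P. -/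
open Matrix BigOperators

namespace Stmt19Aux

variable {C : ℕ} {n : Fin C → ℕ}

lemma idx_eq_iff {k l : Fin C} {j : Fin (n k)} {i : Fin (n l)} :
    (⟨k, j⟩ : Idx n) = ⟨l, i⟩ ↔ k = l ∧ (j : ℕ) = (i : ℕ) := by
  constructor
  · rintro h; cases h; exact ⟨rfl, rfl⟩
  · rintro ⟨rfl, h⟩; exact congrArg (Sigma.mk k) (Fin.ext h)

lemma ite_idx {l k : Fin C} (j : Fin (n l)) (i : Fin (n k)) :
    (if (⟨l, j⟩ : Idx n) = ⟨k, i⟩ then (1:ℝ) else 0)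
      = if l = k ∧ (j : ℕ) = (i : ℕ) then 1 else 0 := by
  exact if_congr idx_eq_iff rfl rfl

lemma ite_idx' {l k : Fin C} (j : Fin (n l)) (i : Fin (n k)) :
    (if (⟨k, i⟩ : Idx n) = ⟨l, j⟩ then (1:ℝ) else 0)
      = if l = k ∧ (j : ℕ) = (i : ℕ) then 1 else 0 := by
  rw [ite_idx]
  exact if_congr (by constructor <;> (rintro ⟨rfl, h⟩; exact ⟨rfl, h.symm⟩)) rfl rfl

lemma sum_ind (l k : Fin C) (i : Fin (n k)) :
    (∑ j : Fin (n l), if (⟨l, j⟩ : Idx n) = ⟨k, i⟩ then (1:ℝ) else 0)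
      = if l = k then 1 else 0 := by
  rw [Finset.sum_congr rfl (fun j _ => ite_idx j i)]
  rcases eq_or_ne l k with rfl | h
  · simp only [true_and, if_pos rfl]
    rw [Finset.sum_congr rfl (fun j _ => if_congr (Fin.val_eq_val j i) rfl rfl)]
    simp
  · rw [if_neg h]
    apply Finset.sum_eq_zero
    intro j _
    rw [if_neg (fun hc => h hc.1)]

lemma sum_ind' (l k : Fin C) (i : Fin (n k)) :
    (∑ j : Fin (n l), if (⟨k, i⟩ : Idx n) = ⟨l, j⟩ then (1:ℝ) else 0)
      = if l = k then 1 else 0 := by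
  rw [Finset.sum_congr rfl (fun j _ => ite_idx' j i), ← sum_ind l k i]
  exact Finset.sum_congr rfl (fun j _ => (ite_idx j i).symm)

variable (hn : ∀ c, 0 < n c)

lemma xv_apply0 (k : Fin C) (j : Fin (n k)) (hj : (j : ℕ) = 0) (p : Idx n) :
    xv n hn k j p = if p = ⟨k, j⟩ then 1 else 0 := by
  rw [xv, if_pos hj, Pi.single_apply]

lemma xv_apply1 (k : Fin C) (j : Fin (n k)) (hj : (j : ℕ) ≠ 0) (p : Idx n) :
    xv n hn k j p
      = (if p = ⟨k, j⟩ then 1 else 0) - (if p = ⟨k, ⟨0, hn k⟩⟩ then 1 else 0) := by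
  rw [xv, if_neg hj]
  simp [Pi.single_apply]

lemma Xv_apply0 (k : Fin C) (i : Fin (n k)) (hi : (i : ℕ) = 0) (p : Idx n) :
    Xv n k i p = if p.1 = k then 1 else 0 := by
  obtain ⟨l, q⟩ := p
  rw [Xv, if_pos hi]
  rw [Finset.sum_apply]
  rw [Finset.sum_congr rfl (fun q' _ => Pi.single_apply (⟨k, q'⟩ : Idx n) (1:ℝ) ⟨l, q⟩)]
  rw [sum_ind' k l q]
  exact if_congr eq_comm rfl rfl

lemma Xv_apply1 (k : Fin C) (i : Fin (n k)) (hi : (i : ℕ) ≠ 0) (p : Idx n) :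
    Xv n k i p = if p = ⟨k, i⟩ then 1 else 0 := by
  rw [Xv, if_neg hi, Pi.single_apply]

lemma idx_eq_of (a b : Idx n) (h1 : a.1 = b.1) (h2 : (a.2 : ℕ) = (b.2 : ℕ)) : a = b := by
  obtain ⟨a1, a2⟩ := a; obtain ⟨b1, b2⟩ := b
  exact idx_eq_iff.mpr ⟨h1, h2⟩

lemma idx_snd_val_eq {a b : Idx n} (h : a = b) : (a.2 : ℕ) = (b.2 : ℕ) := by cases h; rfl

/-- change of basis matrix: columns are the `x^k_j`. -/
noncomputable def Tm : Matrix (Idx n) (Idx n) ℝ := fun p q => xv n hn q.1 q.2 p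

/-- inverse change of basis matrix: rows are the `X^k_i`. -/
noncomputable def Sm : Matrix (Idx n) (Idx n) ℝ := fun p q => Xv n p.1 p.2 q

lemma Sm_mul_Tm : Sm (n := n) * Tm hn = 1 := by
  ext a b
  rw [Matrix.mul_apply, Matrix.one_apply]
  by_cases hb2 : (b.2 : ℕ) = 0
  · have h1 : ∀ p : Idx n, Sm (n := n) a p * Tm hn p b
        = if p = b then Sm (n := n) a p else 0 := by
      intro p
      show Sm (n := n) a p * xv n hn b.1 b.2 p = _
      rw [xv_apply0 hn b.1 b.2 hb2 p, Sigma.eta]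
      by_cases h : p = b
      · rw [if_pos h, if_pos h, mul_one]
      · rw [if_neg h, if_neg h, mul_zero]
    rw [Finset.sum_congr rfl fun p _ => h1 p, Finset.sum_ite_eq' Finset.univ b,
      if_pos (Finset.mem_univ b)]
    show Xv n a.1 a.2 b = _
    by_cases ha2 : (a.2 : ℕ) = 0
    · rw [Xv_apply0 a.1 a.2 ha2 b]
      by_cases hab : a = b
      · rw [if_pos (show b.1 = a.1 by cases hab; rfl), if_pos hab]
      · rw [if_neg hab, if_neg (fun h : b.1 = a.1 =>
          hab (idx_eq_of a b h.symm (ha2.trans hb2.symm)))]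
    · rw [Xv_apply1 a.1 a.2 ha2 b, Sigma.eta]
      have hab : a ≠ b := fun h => ha2 ((idx_snd_val_eq h).trans hb2)
      rw [if_neg (fun h : b = a => hab h.symm), if_neg hab]
  · have h1 : ∀ p : Idx n, Sm (n := n) a p * Tm hn p b
        = (if p = b then Sm (n := n) a p else 0)
          - (if p = (⟨b.1, ⟨0, hn b.1⟩⟩ : Idx n) then Sm (n := n) a p else 0) := by
      intro p
      show Sm (n := n) a p * xv n hn b.1 b.2 p = _
      rw [xv_apply1 hn b.1 b.2 hb2 p, Sigma.eta, mul_sub]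
      congr 1
      · by_cases h : p = b
        · rw [if_pos h, if_pos h, mul_one]
        · rw [if_neg h, if_neg h, mul_zero]
      · by_cases h : p = (⟨b.1, ⟨0, hn b.1⟩⟩ : Idx n)
        · rw [if_pos h, if_pos h, mul_one]
        · rw [if_neg h, if_neg h, mul_zero]
    rw [Finset.sum_congr rfl fun p _ => h1 p, Finset.sum_sub_distrib,
      Finset.sum_ite_eq' Finset.univ b, Finset.sum_ite_eq' Finset.univ
        (⟨b.1, ⟨0, hn b.1⟩⟩ : Idx n), if_pos (Finset.mem_univ _), if_pos (Finset.mem_univ _)]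
    show Xv n a.1 a.2 b - Xv n a.1 a.2 ⟨b.1, ⟨0, hn b.1⟩⟩ = _
    by_cases ha2 : (a.2 : ℕ) = 0
    · rw [Xv_apply0 a.1 a.2 ha2 b, Xv_apply0 a.1 a.2 ha2 ⟨b.1, ⟨0, hn b.1⟩⟩]
      show (if b.1 = a.1 then (1:ℝ) else 0) - (if b.1 = a.1 then 1 else 0) = _
      rw [sub_self, if_neg (fun h : a = b => hb2 ((idx_snd_val_eq h).symm.trans ha2))]
    · rw [Xv_apply1 a.1 a.2 ha2 b, Xv_apply1 a.1 a.2 ha2 ⟨b.1, ⟨0, hn b.1⟩⟩, Sigma.eta]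
      rw [if_neg (fun h : (⟨b.1, ⟨0, hn b.1⟩⟩ : Idx n) = ⟨a.1, a.2⟩ =>
        ha2 (idx_snd_val_eq h).symm), sub_zero]
      by_cases hab : a = b
      · rw [if_pos hab.symm, if_pos hab]
      · rw [if_neg (fun h => hab h.symm), if_neg hab]

lemma Tm_mul_Sm : Tm hn * Sm (n := n) = 1 :=
  mul_eq_one_comm.mp (Sm_mul_Tm hn)

/-- conjugation by the change of basis, as a linear equivalence. -/
noncomputable def e : Matrix (Idx n) (Idx n) ℝ ≃ₗ[ℝ] Matrix (Idx n) (Idx n) ℝ where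
  toFun M := Sm (n := n) * M * Tm hn
  invFun M := Tm hn * M * Sm (n := n)
  map_add' M M' := by noncomm_ring
  map_smul' r M := by
    simp [Matrix.mul_smul, Matrix.smul_mul]
  left_inv M := by
    show Tm hn * (Sm (n := n) * M * Tm hn) * Sm (n := n) = M
    rw [show Tm hn * (Sm (n := n) * M * Tm hn) * Sm (n := n)
        = (Tm hn * Sm (n := n)) * M * (Tm hn * Sm (n := n)) by noncomm_ring,
      Tm_mul_Sm hn, one_mul, mul_one]
  right_inv M := by
    show Sm (n := n) * (Tm hn * M * Sm (n := n)) * Tm hn = M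
    rw [show Sm (n := n) * (Tm hn * M * Sm (n := n)) * Tm hn
        = (Sm (n := n) * Tm hn) * M * (Sm (n := n) * Tm hn) by noncomm_ring,
      Sm_mul_Tm hn, one_mul, mul_one]

lemma e_apply (M : Matrix (Idx n) (Idx n) ℝ) : e hn M = Sm (n := n) * M * Tm hn := rfl

lemma e_mul (M M' : Matrix (Idx n) (Idx n) ℝ) : e hn (M * M') = e hn M * e hn M' := by
  simp only [e_apply]
  rw [show Sm (n := n) * M * Tm hn * (Sm (n := n) * M' * Tm hn)
      = Sm (n := n) * M * (Tm hn * Sm (n := n)) * M' * Tm hn by noncomm_ring, Tm_mul_Sm hn]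
  noncomm_ring

lemma mul_std_apply (M : Matrix (Idx n) (Idx n) ℝ) (p q b c : Idx n) :
    (M * Matrix.single p q (1:ℝ)) b c = if c = q then M b p else 0 := by
  rw [Matrix.mul_apply]
  have h1 : ∀ r : Idx n, M b r * Matrix.single p q (1:ℝ) r c
      = if r = p then (if c = q then M b p else 0) else 0 := by
    intro r
    show M b r * (if p = r ∧ q = c then (1:ℝ) else 0) = _
    by_cases h1 : r = p
    · subst h1
      by_cases h2 : c = q
      · rw [if_pos ⟨rfl, h2.symm⟩, if_pos rfl, if_pos h2, mul_one]
      · rw [if_neg (fun hc => h2 hc.2.symm), if_pos rfl, if_neg h2, mul_zero]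
    · rw [if_neg (fun hc => h1 hc.1.symm), mul_zero, if_neg h1]
  rw [Finset.sum_congr rfl fun r _ => h1 r, Finset.sum_ite_eq' Finset.univ p,
    if_pos (Finset.mem_univ p)]

lemma std_mul_apply (M : Matrix (Idx n) (Idx n) ℝ) (p q b c : Idx n) :
    (Matrix.single p q (1:ℝ) * M) b c = if b = p then M q c else 0 := by
  rw [Matrix.mul_apply]
  have h1 : ∀ r : Idx n, Matrix.single p q (1:ℝ) b r * M r c
      = if r = q then (if b = p then M q c else 0) else 0 := by
    intro r
    show (if p = b ∧ q = r then (1:ℝ) else 0) * M r c = _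
    by_cases h1 : r = q
    · subst h1
      by_cases h2 : b = p
      · rw [if_pos ⟨h2.symm, rfl⟩, if_pos rfl, if_pos h2, one_mul]
      · rw [if_neg (fun hc => h2 hc.1.symm), if_pos rfl, if_neg h2, zero_mul]
    · rw [if_neg (fun hc => h1 hc.2.symm), zero_mul, if_neg h1]
  rw [Finset.sum_congr rfl fun r _ => h1 r, Finset.sum_ite_eq' Finset.univ q,
    if_pos (Finset.mem_univ q)]

lemma e_std_apply (p q a b : Idx n) :
    e hn (Matrix.single p q (1:ℝ)) a b = Xv n a.1 a.2 p * xv n hn b.1 b.2 q := by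
  rw [e_apply, Matrix.mul_apply]
  have h1 : ∀ c : Idx n, (Sm (n := n) * Matrix.single p q (1:ℝ)) a c * Tm hn c b
      = if c = q then Sm (n := n) a p * Tm hn c b else 0 := by
    intro c
    rw [mul_std_apply]
    by_cases h : c = q
    · rw [if_pos h, if_pos h]
    · rw [if_neg h, if_neg h, zero_mul]
  rw [Finset.sum_congr rfl fun c _ => h1 c, Finset.sum_ite_eq' Finset.univ q,
    if_pos (Finset.mem_univ q)]
  rfl

lemma e_vecMulVec (a b : Idx n) :
    e hn (vecMulVec (xv n hn a.1 a.2) (Xv n b.1 b.2)) = Matrix.single a b (1:ℝ) := by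
  ext r c
  rw [e_apply]
  have key : (Sm (n := n) * vecMulVec (xv n hn a.1 a.2) (Xv n b.1 b.2) * Tm hn) r c
      = ((Sm (n := n) * Tm hn) r a) * ((Sm (n := n) * Tm hn) b c) := by
    rw [Matrix.mul_apply]
    have h2 : ∀ q : Idx n,
        (Sm (n := n) * vecMulVec (xv n hn a.1 a.2) (Xv n b.1 b.2)) r q * Tm hn q c
        = ((Sm (n := n) * Tm hn) r a) * (Sm (n := n) b q * Tm hn q c) := by
      intro q
      rw [Matrix.mul_apply]
      have h3 : ∀ p : Idx n,
          Sm (n := n) r p * vecMulVec (xv n hn a.1 a.2) (Xv n b.1 b.2) p q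
          = (Sm (n := n) r p * Tm hn p a) * Sm (n := n) b q := by
        intro p
        rw [vecMulVec_apply]
        show Sm (n := n) r p * (Tm hn p a * Sm (n := n) b q) = _
        ring
      rw [Finset.sum_congr rfl fun p _ => h3 p, ← Finset.sum_mul, ← Matrix.mul_apply]
      ring
    rw [Finset.sum_congr rfl fun q _ => h2 q, ← Finset.mul_sum, ← Matrix.mul_apply]
  rw [key, Sm_mul_Tm hn]
  show (1 : Matrix (Idx n) (Idx n) ℝ) r a * (1 : Matrix (Idx n) (Idx n) ℝ) b c
      = (if a = r ∧ b = c then (1:ℝ) else 0)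
  rw [Matrix.one_apply, Matrix.one_apply]
  by_cases h1 : r = a
  · by_cases h2 : b = c
    · rw [if_pos h1, if_pos h2, if_pos ⟨h1.symm, h2⟩, one_mul]
    · rw [if_pos h1, if_neg h2, mul_zero, if_neg (fun hc : a = r ∧ b = c => h2 hc.2)]
  · rw [if_neg h1, zero_mul, if_neg (fun hc : a = r ∧ b = c => h1 hc.1.symm)]


lemma e_cM (k l : Fin C) :
    e hn (cM n hn k l)
      = Matrix.single (⟨k, ⟨0, hn k⟩⟩ : Idx n) (⟨l, ⟨0, hn l⟩⟩ : Idx n) (1:ℝ) :=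
  e_vecMulVec hn ⟨k, ⟨0, hn k⟩⟩ ⟨l, ⟨0, hn l⟩⟩

lemma e_bM (β γ : Cocolor n) :
    e hn (bM n hn β γ) = Matrix.single β.1 γ.1 (1:ℝ) :=
  e_vecMulVec hn β.1 γ.1

/-- indicator of the set of cocolor indices. -/
def dB : Idx n → ℝ := fun a => if (a.2 : ℕ) = 0 then 0 else 1

/-- indicator of the set of color indices. -/
def dA : Idx n → ℝ := fun a => if (a.2 : ℕ) = 0 then 1 else 0

lemma sumB_eq_diag :
    (∑ β : Cocolor n, Matrix.single (β.1) (β.1) (1:ℝ)) = Matrix.diagonal (dB (n := n)) := by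
  ext a b
  rw [Matrix.sum_apply]
  by_cases hab : a = b
  · subst hab
    rw [Matrix.diagonal_apply_eq, dB]
    by_cases ha : (a.2 : ℕ) = 0
    · rw [if_pos ha]
      apply Finset.sum_eq_zero
      intro β _
      show (if β.1 = a ∧ β.1 = a then (1:ℝ) else 0) = 0
      rw [if_neg]; rintro ⟨h1, -⟩; exact β.2 ((idx_snd_val_eq h1).trans ha)
    · rw [if_neg ha, Finset.sum_eq_single (⟨a, ha⟩ : Cocolor n)]
      · show (if a = a ∧ a = a then (1:ℝ) else 0) = 1
        rw [if_pos ⟨rfl, rfl⟩]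
      · intro β _ hβ
        show (if β.1 = a ∧ β.1 = a then (1:ℝ) else 0) = 0
        rw [if_neg]; rintro ⟨h1, -⟩; exact hβ (Subtype.ext h1)
      · intro h; exact absurd (Finset.mem_univ _) h
  · rw [Matrix.diagonal_apply_ne _ hab]
    apply Finset.sum_eq_zero
    intro β _
    show (if β.1 = a ∧ β.1 = b then (1:ℝ) else 0) = 0
    rw [if_neg]; rintro ⟨h1, h2⟩; exact hab (h1.symm.trans h2)

lemma sumA_eq_diag :
    (∑ c : Fin C, Matrix.single (⟨c, ⟨0, hn c⟩⟩ : Idx n) (⟨c, ⟨0, hn c⟩⟩ : Idx n) (1:ℝ))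
      = Matrix.diagonal (dA (n := n)) := by
  ext a b
  rw [Matrix.sum_apply]
  by_cases hab : a = b
  · subst hab
    rw [Matrix.diagonal_apply_eq, dA]
    by_cases ha : (a.2 : ℕ) = 0
    · rw [if_pos ha, Finset.sum_eq_single a.1]
      · show (if (⟨a.1, ⟨0, hn a.1⟩⟩ : Idx n) = a ∧ (⟨a.1, ⟨0, hn a.1⟩⟩ : Idx n) = a
            then (1:ℝ) else 0) = 1
        rw [if_pos ⟨idx_eq_of _ _ rfl ha.symm, idx_eq_of _ _ rfl ha.symm⟩]
      · intro c _ hc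
        show (if (⟨c, ⟨0, hn c⟩⟩ : Idx n) = a ∧ (⟨c, ⟨0, hn c⟩⟩ : Idx n) = a
            then (1:ℝ) else 0) = 0
        rw [if_neg]; rintro ⟨h1, -⟩; exact hc (congrArg Sigma.fst h1)
      · intro h; exact absurd (Finset.mem_univ _) h
    · rw [if_neg ha]
      apply Finset.sum_eq_zero
      intro c _
      show (if (⟨c, ⟨0, hn c⟩⟩ : Idx n) = a ∧ (⟨c, ⟨0, hn c⟩⟩ : Idx n) = a
          then (1:ℝ) else 0) = 0
      rw [if_neg]; rintro ⟨h1, -⟩; exact ha (idx_snd_val_eq h1).symm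
  · rw [Matrix.diagonal_apply_ne _ hab]
    apply Finset.sum_eq_zero
    intro c _
    show (if (⟨c, ⟨0, hn c⟩⟩ : Idx n) = a ∧ (⟨c, ⟨0, hn c⟩⟩ : Idx n) = b
        then (1:ℝ) else 0) = 0
    rw [if_neg]; rintro ⟨h1, h2⟩; exact hab (h1.symm.trans h2)

lemma e_BBm : e hn (BBm n hn) = Matrix.diagonal (dB (n := n)) := by
  rw [BBm, map_sum, Finset.sum_congr rfl fun β _ => e_bM hn β β, sumB_eq_diag]

lemma e_CCm : e hn (CCm n hn) = Matrix.diagonal (dA (n := n)) := by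
  rw [CCm, map_sum, Finset.sum_congr rfl fun c _ => e_cM hn c c, sumA_eq_diag hn]

/-- the coordinate version of `net`. -/
def netC : Submodule ℝ (Matrix (Idx n) (Idx n) ℝ) where
  carrier := {M | ∀ a b : Idx n, (a.2 : ℕ) = 0 → (b.2 : ℕ) ≠ 0 → M a b = 0}
  add_mem' := by
    intro x y hx hy a b ha hb
    rw [Matrix.add_apply, hx a b ha hb, hy a b ha hb, add_zero]
  zero_mem' := by intro a b _ _; rfl
  smul_mem' := by
    intro r x hx a b ha hb
    rw [Matrix.smul_apply, hx a b ha hb, smul_zero]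

/-- the coordinate version of `P`. -/
def Pc : Submodule ℝ (Matrix (Idx n) (Idx n) ℝ) where
  carrier := {M | (∀ a b : Idx n, ¬(((a.2 : ℕ) = 0 ∧ (b.2 : ℕ) = 0) ∨ a = b) → M a b = 0)
    ∧ ∀ a b : Idx n, (a.2 : ℕ) ≠ 0 → (b.2 : ℕ) ≠ 0 → M a a = M b b}
  add_mem' := by
    rintro x y ⟨hx1, hx2⟩ ⟨hy1, hy2⟩
    constructor
    · intro a b h
      rw [Matrix.add_apply, hx1 a b h, hy1 a b h, add_zero]
    · intro a b ha hb
      rw [Matrix.add_apply, Matrix.add_apply, hx2 a b ha hb, hy2 a b ha hb]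
  zero_mem' := ⟨fun _ _ _ => rfl, fun _ _ _ _ => rfl⟩
  smul_mem' := by
    rintro r x ⟨hx1, hx2⟩
    constructor
    · intro a b h
      rw [Matrix.smul_apply, hx1 a b h, smul_zero]
    · intro a b ha hb
      rw [Matrix.smul_apply, Matrix.smul_apply, hx2 a b ha hb]

/-- the coordinate version of `Q`. -/
def Qc : Submodule ℝ (Matrix (Idx n) (Idx n) ℝ) where
  carrier := {M | (∀ a b : Idx n, ¬(((a.2 : ℕ) ≠ 0 ∧ (b.2 : ℕ) ≠ 0) ∨ a = b) → M a b = 0)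
    ∧ ∀ a b : Idx n, (a.2 : ℕ) = 0 → (b.2 : ℕ) = 0 → M a a = M b b}
  add_mem' := by
    rintro x y ⟨hx1, hx2⟩ ⟨hy1, hy2⟩
    constructor
    · intro a b h
      rw [Matrix.add_apply, hx1 a b h, hy1 a b h, add_zero]
    · intro a b ha hb
      rw [Matrix.add_apply, Matrix.add_apply, hx2 a b ha hb, hy2 a b ha hb]
  zero_mem' := ⟨fun _ _ _ => rfl, fun _ _ _ _ => rfl⟩
  smul_mem' := by
    rintro r x ⟨hx1, hx2⟩
    constructor
    · intro a b h
      rw [Matrix.smul_apply, hx1 a b h, smul_zero]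
    · intro a b ha hb
      rw [Matrix.smul_apply, Matrix.smul_apply, hx2 a b ha hb]


lemma e_nu_mem (k l : Fin C) (σ : Fin (n l) → Fin (n k)) :
    e hn (nu n k l σ) ∈ netC (n := n) := by
  intro a b ha hb
  have step : ∀ j : Fin (n l),
      e hn (Matrix.single (⟨k, σ j⟩ : Idx n) (⟨l, j⟩ : Idx n) (1:ℝ)) a b
      = (if k = a.1 then (1:ℝ) else 0) *
        ((if (⟨l, j⟩ : Idx n) = ⟨b.1, b.2⟩ then (1:ℝ) else 0)
          - (if (⟨l, j⟩ : Idx n) = ⟨b.1, ⟨0, hn b.1⟩⟩ then 1 else 0)) := by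
    intro j
    rw [e_std_apply hn, Xv_apply0 a.1 a.2 ha, xv_apply1 hn b.1 b.2 hb]
  rw [nu, map_sum, Matrix.sum_apply, Finset.sum_congr rfl fun j _ => step j,
    ← Finset.mul_sum, Finset.sum_sub_distrib, sum_ind l b.1 b.2,
    sum_ind l b.1 ⟨0, hn b.1⟩, sub_self, mul_zero]

lemma mem_span_pairs {s : Set (Matrix (Idx n) (Idx n) ℝ)} {P : Idx n → Idx n → Prop}
    (hgen : ∀ a b, P a b → Matrix.single a b (1:ℝ) ∈ s)
    (M : Matrix (Idx n) (Idx n) ℝ) (hM : ∀ a b, ¬ P a b → M a b = 0) :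
    M ∈ Submodule.span ℝ s := by
  rw [matrix_eq_sum_single M]
  refine Submodule.sum_mem _ fun a _ => Submodule.sum_mem _ fun b _ => ?_
  by_cases h : P a b
  · have h2 : Matrix.single a b (M a b) = (M a b) • Matrix.single a b (1:ℝ) := by
      rw [smul_single, smul_eq_mul, mul_one]
    rw [h2]
    exact Submodule.smul_mem _ _ (Submodule.subset_span (hgen a b h))
  · rw [hM a b h, single_zero]
    exact Submodule.zero_mem _

lemma span_Pc : Submodule.span ℝ (insert (Matrix.diagonal (dB (n := n)))
      {M | ∃ k l : Fin C,
        M = Matrix.single (⟨k, ⟨0, hn k⟩⟩ : Idx n) (⟨l, ⟨0, hn l⟩⟩ : Idx n) (1:ℝ)})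
    = Pc (n := n) := by
  have hgen : ∀ a b : Idx n, ((a.2 : ℕ) = 0 ∧ (b.2 : ℕ) = 0) →
      Matrix.single a b (1:ℝ) ∈ insert (Matrix.diagonal (dB (n := n)))
      {M | ∃ k l : Fin C,
        M = Matrix.single (⟨k, ⟨0, hn k⟩⟩ : Idx n) (⟨l, ⟨0, hn l⟩⟩ : Idx n) (1:ℝ)} := by
    rintro a b ⟨ha, hb⟩
    have e1 : (⟨a.1, ⟨0, hn a.1⟩⟩ : Idx n) = a := idx_eq_of _ _ rfl ha.symm
    have e2 : (⟨b.1, ⟨0, hn b.1⟩⟩ : Idx n) = b := idx_eq_of _ _ rfl hb.symm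
    exact Set.mem_insert_iff.mpr (Or.inr ⟨a.1, b.1, by rw [e1, e2]⟩)
  apply le_antisymm
  · rw [Submodule.span_le]
    rintro M (rfl | ⟨k, l, rfl⟩)
    · constructor
      · intro a b h
        exact Matrix.diagonal_apply_ne _ (fun hab => h (Or.inr hab))
      · intro a b ha hb
        rw [Matrix.diagonal_apply_eq, Matrix.diagonal_apply_eq]
        show (if (a.2 : ℕ) = 0 then (0:ℝ) else 1) = (if (b.2 : ℕ) = 0 then (0:ℝ) else 1)
        rw [if_neg ha, if_neg hb]
    · constructor
      · intro a b h
        show (if (⟨k, ⟨0, hn k⟩⟩ : Idx n) = a ∧ (⟨l, ⟨0, hn l⟩⟩ : Idx n) = b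
            then (1:ℝ) else 0) = 0
        rw [if_neg]
        rintro ⟨h1, h2⟩
        exact h (Or.inl ⟨(idx_snd_val_eq h1).symm, (idx_snd_val_eq h2).symm⟩)
      · intro a b ha hb
        show (if (⟨k, ⟨0, hn k⟩⟩ : Idx n) = a ∧ (⟨l, ⟨0, hn l⟩⟩ : Idx n) = a
            then (1:ℝ) else 0)
          = (if (⟨k, ⟨0, hn k⟩⟩ : Idx n) = b ∧ (⟨l, ⟨0, hn l⟩⟩ : Idx n) = b
            then (1:ℝ) else 0)
        rw [if_neg (by rintro ⟨h1, -⟩; exact ha (idx_snd_val_eq h1).symm),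
          if_neg (by rintro ⟨h1, -⟩; exact hb (idx_snd_val_eq h1).symm)]
  · rintro M ⟨hM1, hM2⟩
    by_cases hB : Nonempty (Cocolor n)
    · set β0 : Cocolor n := hB.some with hβ0
      set t : ℝ := M β0.1 β0.1 with ht
      have hMeq : M = t • Matrix.diagonal (dB (n := n))
          + (M - t • Matrix.diagonal (dB (n := n))) := by abel
      rw [hMeq]
      refine Submodule.add_mem _
        (Submodule.smul_mem _ _ (Submodule.subset_span (Set.mem_insert _ _))) ?_
      apply mem_span_pairs hgen
      intro a b hab
      rw [Matrix.sub_apply, Matrix.smul_apply]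
      by_cases h2 : a = b
      · subst h2
        have ha : (a.2 : ℕ) ≠ 0 := fun h => hab ⟨h, h⟩
        rw [Matrix.diagonal_apply_eq]
        show M a a - t • (if (a.2 : ℕ) = 0 then (0:ℝ) else 1) = 0
        rw [if_neg ha, smul_eq_mul, mul_one, hM2 a β0.1 ha β0.2, ← ht, sub_self]
      · rw [Matrix.diagonal_apply_ne _ h2, smul_zero, sub_zero]
        refine hM1 a b ?_
        rintro (hA | h)
        · exact hab hA
        · exact h2 h
    · apply mem_span_pairs hgen
      intro a b hab
      have hall : ∀ p : Idx n, (p.2 : ℕ) = 0 := by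
        intro p
        by_contra h
        exact hB ⟨⟨p, h⟩⟩
      exact absurd ⟨hall a, hall b⟩ hab

include hn in
lemma span_Qc (hC : 0 < C) : Submodule.span ℝ (insert (Matrix.diagonal (dA (n := n)))
      {M | ∃ β γ : Cocolor n, M = Matrix.single β.1 γ.1 (1:ℝ)})
    = Qc (n := n) := by
  have hgen : ∀ a b : Idx n, ((a.2 : ℕ) ≠ 0 ∧ (b.2 : ℕ) ≠ 0) →
      Matrix.single a b (1:ℝ) ∈ insert (Matrix.diagonal (dA (n := n)))
      {M | ∃ β γ : Cocolor n, M = Matrix.single β.1 γ.1 (1:ℝ)} := by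
    rintro a b ⟨ha, hb⟩
    exact Set.mem_insert_iff.mpr (Or.inr ⟨⟨a, ha⟩, ⟨b, hb⟩, rfl⟩)
  apply le_antisymm
  · rw [Submodule.span_le]
    rintro M (rfl | ⟨β, γ, rfl⟩)
    · constructor
      · intro a b h
        exact Matrix.diagonal_apply_ne _ (fun hab => h (Or.inr hab))
      · intro a b ha hb
        rw [Matrix.diagonal_apply_eq, Matrix.diagonal_apply_eq]
        show (if (a.2 : ℕ) = 0 then (1:ℝ) else 0) = (if (b.2 : ℕ) = 0 then (1:ℝ) else 0)
        rw [if_pos ha, if_pos hb]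
    · constructor
      · intro a b h
        show (if β.1 = a ∧ γ.1 = b then (1:ℝ) else 0) = 0
        rw [if_neg]
        rintro ⟨h1, h2⟩
        exact h (Or.inl ⟨h1 ▸ β.2, h2 ▸ γ.2⟩)
      · intro a b ha hb
        show (if β.1 = a ∧ γ.1 = a then (1:ℝ) else 0)
          = (if β.1 = b ∧ γ.1 = b then (1:ℝ) else 0)
        rw [if_neg (by rintro ⟨h1, -⟩; exact (h1 ▸ β.2) ha),
          if_neg (by rintro ⟨h1, -⟩; exact (h1 ▸ β.2) hb)]
  · rintro M ⟨hM1, hM2⟩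
    set a0 : Idx n := ⟨⟨0, hC⟩, ⟨0, hn ⟨0, hC⟩⟩⟩ with ha0
    set t : ℝ := M a0 a0 with ht
    have hMeq : M = t • Matrix.diagonal (dA (n := n))
        + (M - t • Matrix.diagonal (dA (n := n))) := by abel
    rw [hMeq]
    refine Submodule.add_mem _
      (Submodule.smul_mem _ _ (Submodule.subset_span (Set.mem_insert _ _))) ?_
    apply mem_span_pairs hgen
    intro a b hab
    rw [Matrix.sub_apply, Matrix.smul_apply]
    by_cases h2 : a = b
    · subst h2
      have ha : (a.2 : ℕ) = 0 := by
        by_contra h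
        exact hab ⟨h, h⟩
      rw [Matrix.diagonal_apply_eq]
      show M a a - t • (if (a.2 : ℕ) = 0 then (1:ℝ) else 0) = 0
      rw [if_pos ha, smul_eq_mul, mul_one, hM2 a a0 ha rfl, ← ht, sub_self]
    · rw [Matrix.diagonal_apply_ne _ h2, smul_zero, sub_zero]
      refine hM1 a b ?_
      rintro (hB | h)
      · exact hab hB
      · exact h2 h


include hn in
lemma centP (y : Matrix (Idx n) (Idx n) ℝ) (hy : y ∈ netC (n := n)) :
    (∀ p ∈ Pc (n := n), y * p - p * y = 0) ↔ y ∈ Qc (n := n) := by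
  constructor
  · intro H
    constructor
    · intro a b hab
      by_cases hb : (b.2 : ℕ) = 0
      · have hp : Matrix.single b b (1:ℝ) ∈ Pc (n := n) := by
          constructor
          · intro r c h
            show (if b = r ∧ b = c then (1:ℝ) else 0) = 0
            rw [if_neg]
            rintro ⟨h1, h2⟩
            exact h (Or.inr (h1.symm.trans h2))
          · intro r c hr hc
            show (if b = r ∧ b = r then (1:ℝ) else 0) = (if b = c ∧ b = c then (1:ℝ) else 0)
            rw [if_neg (by rintro ⟨h1, -⟩; exact hr ((idx_snd_val_eq h1).symm.trans hb)),
              if_neg (by rintro ⟨h1, -⟩; exact hc ((idx_snd_val_eq h1).symm.trans hb))]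
        have h0 := congrFun (congrFun (H _ hp) a) b
        have hab' : a ≠ b := fun h => hab (Or.inr h)
        rw [Matrix.sub_apply, mul_std_apply, std_mul_apply, Matrix.zero_apply,
          if_pos rfl, if_neg hab', sub_zero] at h0
        exact h0
      · have ha : (a.2 : ℕ) = 0 := by
          by_contra h
          exact hab (Or.inl ⟨h, hb⟩)
        exact hy a b ha hb
    · intro a b ha hb
      by_cases h2 : a = b
      · rw [h2]
      · have hp : Matrix.single a b (1:ℝ) ∈ Pc (n := n) := by
          constructor
          · intro r c h
            show (if a = r ∧ b = c then (1:ℝ) else 0) = 0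
            rw [if_neg]
            rintro ⟨h1, h2'⟩
            exact h (Or.inl ⟨(idx_snd_val_eq h1).symm.trans ha, (idx_snd_val_eq h2').symm.trans hb⟩)
          · intro r c hr hc
            show (if a = r ∧ b = r then (1:ℝ) else 0) = (if a = c ∧ b = c then (1:ℝ) else 0)
            rw [if_neg (by rintro ⟨h1, -⟩; exact hr ((idx_snd_val_eq h1).symm.trans ha)),
              if_neg (by rintro ⟨h1, -⟩; exact hc ((idx_snd_val_eq h1).symm.trans ha))]
        have h0 := congrFun (congrFun (H _ hp) a) b
        rw [Matrix.sub_apply, mul_std_apply, std_mul_apply, Matrix.zero_apply,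
          if_pos rfl, if_pos rfl, sub_eq_zero] at h0
        exact h0
  · rintro ⟨hq1, hq2⟩ p hp
    rw [← span_Pc hn] at hp
    induction hp using Submodule.span_induction with
    | mem p hp =>
      rcases hp with rfl | ⟨k, l, rfl⟩
      · ext a b
        rw [Matrix.sub_apply, Matrix.mul_diagonal, Matrix.diagonal_mul, Matrix.zero_apply]
        show y a b * (if (b.2 : ℕ) = 0 then (0:ℝ) else 1)
            - (if (a.2 : ℕ) = 0 then (0:ℝ) else 1) * y a b = 0
        by_cases ha : (a.2 : ℕ) = 0 <;> by_cases hb : (b.2 : ℕ) = 0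
        · rw [if_pos ha, if_pos hb]; ring
        · rw [hy a b ha hb]; ring
        · rw [hq1 a b (by
            rintro (⟨-, h⟩ | h)
            · exact h hb
            · exact ha ((idx_snd_val_eq h).trans hb))]
          ring
        · rw [if_neg ha, if_neg hb]; ring
      · ext a b
        rw [Matrix.sub_apply, mul_std_apply, std_mul_apply, Matrix.zero_apply]
        by_cases h1 : b = (⟨l, ⟨0, hn l⟩⟩ : Idx n) <;>
          by_cases h2 : a = (⟨k, ⟨0, hn k⟩⟩ : Idx n)
        · rw [if_pos h1, if_pos h2, h1, h2, sub_eq_zero]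
          exact hq2 _ _ rfl rfl
        · rw [if_pos h1, if_neg h2, sub_zero]
          refine hq1 a _ ?_
          rintro (⟨-, h⟩ | h)
          · exact h rfl
          · exact h2 h
        · rw [if_neg h1, if_pos h2, zero_sub, neg_eq_zero]
          refine hq1 _ b ?_
          rintro (⟨h, -⟩ | h)
          · exact h rfl
          · exact h1 h.symm
        · rw [if_neg h1, if_neg h2, sub_zero]
    | zero => rw [mul_zero, zero_mul, sub_zero]
    | add p p' hp hp' ih ih' =>
      have h3 : y * (p + p') - (p + p') * y = (y * p - p * y) + (y * p' - p' * y) := by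
        noncomm_ring
      rw [h3, ih, ih', add_zero]
    | smul r p hp ih =>
      have h3 : y * (r • p) - (r • p) * y = r • (y * p - p * y) := by
        rw [Matrix.mul_smul, Matrix.smul_mul, smul_sub]
      rw [h3, ih, smul_zero]

include hn in
lemma centQ (hC : 0 < C) (y : Matrix (Idx n) (Idx n) ℝ) (hy : y ∈ netC (n := n)) :
    (∀ q ∈ Qc (n := n), y * q - q * y = 0) ↔ y ∈ Pc (n := n) := by
  have hdA : Matrix.diagonal (dA (n := n)) ∈ Qc (n := n) := by
    constructor
    · intro a b h
      exact Matrix.diagonal_apply_ne _ (fun hab => h (Or.inr hab))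
    · intro a b ha hb
      rw [Matrix.diagonal_apply_eq, Matrix.diagonal_apply_eq]
      show (if (a.2 : ℕ) = 0 then (1:ℝ) else 0) = (if (b.2 : ℕ) = 0 then (1:ℝ) else 0)
      rw [if_pos ha, if_pos hb]
  constructor
  · intro H
    constructor
    · intro a b hab
      by_cases hb : (b.2 : ℕ) = 0
      · have ha : (a.2 : ℕ) ≠ 0 := fun h => hab (Or.inl ⟨h, hb⟩)
        have h0 := congrFun (congrFun (H _ hdA) a) b
        rw [Matrix.sub_apply, Matrix.mul_diagonal, Matrix.diagonal_mul,
          Matrix.zero_apply] at h0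
        have h0' : y a b * (if (b.2 : ℕ) = 0 then (1:ℝ) else 0)
            - (if (a.2 : ℕ) = 0 then (1:ℝ) else 0) * y a b = 0 := h0
        rw [if_pos hb, if_neg ha, mul_one, zero_mul, sub_zero] at h0'
        exact h0'
      · by_cases ha : (a.2 : ℕ) = 0
        · exact hy a b ha hb
        · have hq : Matrix.single b b (1:ℝ) ∈ Qc (n := n) := by
            constructor
            · intro r c h
              show (if b = r ∧ b = c then (1:ℝ) else 0) = 0
              rw [if_neg]
              rintro ⟨h1, h2⟩
              exact h (Or.inr (h1.symm.trans h2))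
            · intro r c hr hc
              show (if b = r ∧ b = r then (1:ℝ) else 0) = (if b = c ∧ b = c then (1:ℝ) else 0)
              rw [if_neg (by rintro ⟨h1, -⟩; exact hb ((idx_snd_val_eq h1).symm ▸ hr)),
                if_neg (by rintro ⟨h1, -⟩; exact hb ((idx_snd_val_eq h1).symm ▸ hc))]
          have h0 := congrFun (congrFun (H _ hq) a) b
          have hab' : a ≠ b := fun h => hab (Or.inr h)
          rw [Matrix.sub_apply, mul_std_apply, std_mul_apply, Matrix.zero_apply,
            if_pos rfl, if_neg hab', sub_zero] at h0
          exact h0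
    · intro a b ha hb
      by_cases h2 : a = b
      · rw [h2]
      · have hq : Matrix.single a b (1:ℝ) ∈ Qc (n := n) := by
          constructor
          · intro r c h
            show (if a = r ∧ b = c then (1:ℝ) else 0) = 0
            rw [if_neg]
            rintro ⟨h1, h2'⟩
            exact h (Or.inl ⟨(idx_snd_val_eq h1) ▸ ha, (idx_snd_val_eq h2') ▸ hb⟩)
          · intro r c hr hc
            show (if a = r ∧ b = r then (1:ℝ) else 0) = (if a = c ∧ b = c then (1:ℝ) else 0)
            rw [if_neg (by rintro ⟨h1, -⟩; exact ha ((idx_snd_val_eq h1).trans hr)),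
              if_neg (by rintro ⟨h1, -⟩; exact ha ((idx_snd_val_eq h1).trans hc))]
        have h0 := congrFun (congrFun (H _ hq) a) b
        rw [Matrix.sub_apply, mul_std_apply, std_mul_apply, Matrix.zero_apply,
          if_pos rfl, if_pos rfl, sub_eq_zero] at h0
        exact h0
  · rintro ⟨hp1, hp2⟩ q hq
    rw [← span_Qc hn hC] at hq
    induction hq using Submodule.span_induction with
    | mem q hq =>
      rcases hq with rfl | ⟨β, γ, rfl⟩
      · ext a b
        rw [Matrix.sub_apply, Matrix.mul_diagonal, Matrix.diagonal_mul, Matrix.zero_apply]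
        show y a b * (if (b.2 : ℕ) = 0 then (1:ℝ) else 0)
            - (if (a.2 : ℕ) = 0 then (1:ℝ) else 0) * y a b = 0
        by_cases ha : (a.2 : ℕ) = 0 <;> by_cases hb : (b.2 : ℕ) = 0
        · rw [if_pos ha, if_pos hb]; ring
        · rw [hy a b ha hb]; ring
        · rw [hp1 a b (by
            rintro (⟨h, -⟩ | h)
            · exact ha h
            · exact ha ((idx_snd_val_eq h).trans hb))]
          ring
        · rw [if_neg ha, if_neg hb]; ring
      · ext a b
        rw [Matrix.sub_apply, mul_std_apply, std_mul_apply, Matrix.zero_apply]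
        by_cases h1 : b = γ.1 <;> by_cases h2 : a = β.1
        · rw [if_pos h1, if_pos h2, h1, h2, sub_eq_zero]
          exact hp2 _ _ β.2 γ.2
        · rw [if_pos h1, if_neg h2, sub_zero]
          refine hp1 a _ ?_
          rintro (⟨-, h⟩ | h)
          · exact β.2 h
          · exact h2 h
        · rw [if_neg h1, if_pos h2, zero_sub, neg_eq_zero]
          refine hp1 _ b ?_
          rintro (⟨h, -⟩ | h)
          · exact γ.2 h
          · exact h1 h.symm
        · rw [if_neg h1, if_neg h2, sub_zero]
    | zero => rw [mul_zero, zero_mul, sub_zero]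
    | add q q' hq hq' ih ih' =>
      have h3 : y * (q + q') - (q + q') * y = (y * q - q * y) + (y * q' - q' * y) := by
        noncomm_ring
      rw [h3, ih, ih', add_zero]
    | smul r q hq ih =>
      have h3 : y * (r • q) - (r • q) * y = r • (y * q - q * y) := by
        rw [Matrix.mul_smul, Matrix.smul_mul, smul_sub]
      rw [h3, ih, smul_zero]


include hn in
lemma map_net (x : Matrix (Idx n) (Idx n) ℝ) (hx : x ∈ net n) :
    e hn x ∈ netC (n := n) := by
  induction hx using Submodule.span_induction with
  | mem M hM =>
    obtain ⟨k, l, σ, rfl⟩ := hM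
    exact e_nu_mem hn k l σ
  | zero =>
    rw [map_zero]
    exact (netC (n := n)).zero_mem
  | add p q hp hq ih ih' =>
    rw [map_add]
    exact (netC (n := n)).add_mem ih ih'
  | smul r p hp ih =>
    rw [LinearEquiv.map_smul]
    exact (netC (n := n)).smul_mem r ih

lemma map_spanP : Submodule.map ((e hn : _ ≃ₗ[ℝ] _) : _ →ₗ[ℝ] _)
    (Submodule.span ℝ (insert (BBm n hn) {M | ∃ k l : Fin C, M = cM n hn k l}))
    = Pc (n := n) := by
  rw [Submodule.map_span]
  simp only [LinearEquiv.coe_coe]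
  have himg : (⇑(e hn) ''
        insert (BBm n hn) {M | ∃ k l : Fin C, M = cM n hn k l})
      = insert (Matrix.diagonal (dB (n := n)))
        {M | ∃ k l : Fin C,
          M = Matrix.single (⟨k, ⟨0, hn k⟩⟩ : Idx n) (⟨l, ⟨0, hn l⟩⟩ : Idx n) (1:ℝ)} := by
    rw [Set.image_insert_eq]
    congr 1
    · exact e_BBm hn
    · ext M
      constructor
      · rintro ⟨M', ⟨k, l, rfl⟩, rfl⟩
        exact ⟨k, l, e_cM hn k l⟩
      · rintro ⟨k, l, rfl⟩
        exact ⟨cM n hn k l, ⟨k, l, rfl⟩, e_cM hn k l⟩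
  rw [himg, span_Pc hn]

lemma map_spanQ (hC : 0 < C) : Submodule.map ((e hn : _ ≃ₗ[ℝ] _) : _ →ₗ[ℝ] _)
    (Submodule.span ℝ (insert (CCm n hn) {M | ∃ β γ : Cocolor n, M = bM n hn β γ}))
    = Qc (n := n) := by
  rw [Submodule.map_span]
  simp only [LinearEquiv.coe_coe]
  have himg : (⇑(e hn) ''
        insert (CCm n hn) {M | ∃ β γ : Cocolor n, M = bM n hn β γ})
      = insert (Matrix.diagonal (dA (n := n)))
        {M | ∃ β γ : Cocolor n, M = Matrix.single β.1 γ.1 (1:ℝ)} := by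
    rw [Set.image_insert_eq]
    congr 1
    · exact e_CCm hn
    · ext M
      constructor
      · rintro ⟨M', ⟨β, γ, rfl⟩, rfl⟩
        exact ⟨β, γ, e_bM hn β γ⟩
      · rintro ⟨β, γ, rfl⟩
        exact ⟨bM n hn β γ, ⟨β, γ, rfl⟩, e_bM hn β γ⟩
  rw [himg, span_Qc hn hC]

include hn in
lemma dual_transfer (s t : Set (Matrix (Idx n) (Idx n) ℝ))
    (St Tt : Submodule ℝ (Matrix (Idx n) (Idx n) ℝ))
    (hs : Submodule.map ((e hn : _ ≃ₗ[ℝ] _) : _ →ₗ[ℝ] _) (Submodule.span ℝ s) = St)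
    (ht : Submodule.map ((e hn : _ ≃ₗ[ℝ] _) : _ →ₗ[ℝ] _) (Submodule.span ℝ t) = Tt)
    (x : Matrix (Idx n) (Idx n) ℝ)
    (hcent : (∀ p ∈ St, e hn x * p - p * e hn x = 0) ↔ e hn x ∈ Tt) :
    (∀ p ∈ Submodule.span ℝ s, x * p - p * x = 0) ↔ x ∈ Submodule.span ℝ t := by
  constructor
  · intro H
    have H' : ∀ p' ∈ St, e hn x * p' - p' * e hn x = 0 := by
      intro p' hp'
      rw [← hs, Submodule.mem_map] at hp'
      obtain ⟨p, hp, rfl⟩ := hp'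
      show e hn x * e hn p - e hn p * e hn x = 0
      rw [← e_mul hn, ← e_mul hn, ← map_sub, H p hp, map_zero]
    have hq := hcent.mp H'
    rw [← ht, Submodule.mem_map] at hq
    obtain ⟨x', hx', hxe⟩ := hq
    have hxx : x' = x := (e hn).injective hxe
    rwa [← hxx]
  · intro hxT p hp
    have hq : e hn x ∈ Tt := by
      rw [← ht, Submodule.mem_map]
      exact ⟨x, hxT, rfl⟩
    have hpS : e hn p ∈ St := by
      rw [← hs, Submodule.mem_map]
      exact ⟨p, hp, rfl⟩
    have h2 := hcent.mpr hq (e hn p) hpS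
    have h3 : e hn (x * p - p * x) = e hn 0 := by
      rw [map_sub, e_mul hn, e_mul hn, map_zero]
      exact h2
    exact (e hn).injective h3

end Stmt19Aux

/-- `P = ℝ𝖡 + span{𝔠}` and `Q = ℝ𝖢 + span{𝔟}` form a dual pair in `net_{C,N}`: the
centralizer of each in `net_{C,N}` is the other. -/
theorem stmt19 {C : ℕ} (hC : 0 < C) (n : Fin C → ℕ) (hn : ∀ c, 0 < n c)
    (hCN : C < ∑ c, n c) :
    ∀ x ∈ net n,
      ((∀ p ∈ Submodule.span ℝ
          (insert (BBm n hn) {M | ∃ k l : Fin C, M = cM n hn k l}),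
          x * p - p * x = 0) ↔
        x ∈ Submodule.span ℝ
          (insert (CCm n hn) {M | ∃ β γ : Cocolor n, M = bM n hn β γ})) ∧
      ((∀ q ∈ Submodule.span ℝ
          (insert (CCm n hn) {M | ∃ β γ : Cocolor n, M = bM n hn β γ}),
          x * q - q * x = 0) ↔
        x ∈ Submodule.span ℝ
          (insert (BBm n hn) {M | ∃ k l : Fin C, M = cM n hn k l})) := by
  intro x hx
  have hxC := Stmt19Aux.map_net hn x hx
  exact ⟨Stmt19Aux.dual_transfer hn _ _ _ _ (Stmt19Aux.map_spanP hn)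
      (Stmt19Aux.map_spanQ hn hC) x (Stmt19Aux.centP hn _ hxC),
    Stmt19Aux.dual_transfer hn _ _ _ _ (Stmt19Aux.map_spanQ hn hC)
      (Stmt19Aux.map_spanP hn) x (Stmt19Aux.centQ hn hC _ hxC)⟩
end
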